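/- arXiv:0911.4038 — 3 statements merged into one kernel-verified Lean document; each statement's English description precedes it below -/
import Mathlib

section
/- For every n ≥ 1 and every x ∈ ℂ, the average over S_n (uniform measure) of the characteristic polynomial det(I − x g) of the permutation matrix g equals 1 − x. -/
open scoped BigOperators
open Equiv Finset

lemma sum_over_fixing {α : Type*} [Fintype α] [DecidableEq α] (p : α → Prop) [DecidablePred p]
    (F : Equiv.Perm α → ℂ)
    [D : ∀ τ : Equiv.Perm α, Decidable (∀ i, ¬ p i → τ i = i)] :
    ∑ τ : Equiv.Perm α, (if ∀ i, ¬ p i → τ i = i then F τ else 0)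
      = ∑ f : Equiv.Perm (Subtype p), F (Equiv.Perm.ofSubtype f) := by
  classical
  rw [← Finset.sum_filter]
  rw [Finset.sum_subtype (p := fun τ : Equiv.Perm α => ∀ i, ¬ p i → τ i = i) _
      (fun τ => by simp) (fun τ => F τ)]
  exact Fintype.sum_equiv (Equiv.Perm.subtypeEquivSubtypePerm p) _ _ (fun f => rfl) |>.symm

lemma sum_sign_eq_zero {α : Type*} [Fintype α] [DecidableEq α] {a b : α} (hab : a ≠ b) :
    ∑ f : Equiv.Perm α, ((Equiv.Perm.sign f : ℤ) : ℂ) = 0 := by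
  have key : ∑ f : Equiv.Perm α, -((Equiv.Perm.sign f : ℤ) : ℂ)
      = ∑ f : Equiv.Perm α, ((Equiv.Perm.sign f : ℤ) : ℂ) := by
    refine Fintype.sum_equiv (Equiv.mulLeft (Equiv.swap a b)) _ _ fun f => ?_
    simp [Equiv.Perm.sign_swap hab]
  rw [Finset.sum_neg_distrib] at key
  linear_combination (-1/2 : ℂ) * key

lemma sum_sign_eq_one {α : Type*} [Fintype α] [DecidableEq α] (h : Subsingleton α) :
    ∑ f : Equiv.Perm α, ((Equiv.Perm.sign f : ℤ) : ℂ) = 1 := by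
  have : Subsingleton α := h
  have : Subsingleton (Equiv.Perm α) := inferInstance
  rw [Fintype.sum_subsingleton _ 1]
  simp

lemma count_fixing (n : ℕ) (T : Finset (Fin n)) :
    ∑ ρ : Equiv.Perm (Fin n), (if ∀ i ∈ T, ρ i = i then (1 : ℂ) else 0)
      = (Nat.factorial (n - T.card) : ℂ) := by
  classical
  have h1 : ∀ ρ : Equiv.Perm (Fin n),
      (if ∀ i ∈ T, ρ i = i then (1 : ℂ) else 0)
        = (if ∀ i, ¬ (i ∉ T) → ρ i = i then (1 : ℂ) else 0) := by
    intro ρ; simp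
  simp_rw [h1]
  rw [sum_over_fixing (fun i => i ∉ T) (fun _ => (1 : ℂ))]
  rw [Finset.sum_const, Finset.card_univ, Fintype.card_perm]
  have hc : Fintype.card {i : Fin n // i ∉ T} = n - T.card := by
    simp [Fintype.card_subtype_compl]
  rw [hc]
  simp

lemma sign_sum_fixing (n : ℕ) (T : Finset (Fin n)) :
    ∑ τ : Equiv.Perm (Fin n),
        ((Equiv.Perm.sign τ : ℤ) : ℂ) * (if ∀ i, i ∉ T → τ i = i then 1 else 0)
      = if T.card ≤ 1 then 1 else 0 := by
  classical
  have h1 : ∀ τ : Equiv.Perm (Fin n),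
      ((Equiv.Perm.sign τ : ℤ) : ℂ) * (if ∀ i, i ∉ T → τ i = i then 1 else 0)
        = (if ∀ i, ¬ (i ∈ T) → τ i = i then ((Equiv.Perm.sign τ : ℤ) : ℂ) else 0) := by
    intro τ
    by_cases h : ∀ i, i ∉ T → τ i = i <;> simp [h]
  simp_rw [h1]
  rw [sum_over_fixing (fun i => i ∈ T) (fun τ => ((Equiv.Perm.sign τ : ℤ) : ℂ))]
  simp_rw [Equiv.Perm.sign_ofSubtype]
  by_cases h : T.card ≤ 1
  · rw [if_pos h]
    convert @sum_sign_eq_one _ (Subtype.fintype fun i => i ∈ T) _ ?_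
    refine ⟨fun a b => Subtype.ext ?_⟩
    exact Finset.card_le_one.mp h a.1 a.2 b.1 b.2
  · rw [if_neg h]
    obtain ⟨a, ha, b, hb, hab⟩ := Finset.one_lt_card.mp (show 1 < T.card by omega)
    convert @sum_sign_eq_zero _ (Subtype.fintype fun i => i ∈ T) _ ⟨a, ha⟩ ⟨b, hb⟩ (by simpa using hab)

/-- For every `n ≥ 1` and `x ∈ ℂ`, the uniform average over `S_n` of the characteristic
polynomial `det(I - x g)` of the permutation matrix `g` equals `1 - x`. -/
theorem stmt5 (n : ℕ) (hn : 1 ≤ n) (x : ℂ) :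
    ((Nat.factorial n : ℂ))⁻¹ *
        ∑ σ : Equiv.Perm (Fin n), Matrix.det (1 - x • σ.permMatrix ℂ)
      = 1 - x := by
  classical
  have hfac : (Nat.factorial n : ℂ) ≠ 0 := Nat.cast_ne_zero.mpr n.factorial_ne_zero
  -- entrywise description of the matrix
  have hent : ∀ σ τ : Equiv.Perm (Fin n), ∀ i : Fin n,
      (1 - x • σ.permMatrix ℂ) (τ i) i
        = (if τ i = i then (1 : ℂ) else 0) - x * (if σ (τ i) = i then 1 else 0) := by
    intro σ τ i
    by_cases h1 : τ i = i <;> by_cases h2 : σ (τ i) = i <;>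
      simp [Matrix.sub_apply, Matrix.one_apply, Equiv.Perm.permMatrix, PEquiv.toMatrix_apply,
        Equiv.toPEquiv_apply, h1, h2]
  -- Leibniz expansion
  have h1 : ∑ σ : Equiv.Perm (Fin n), Matrix.det (1 - x • σ.permMatrix ℂ)
      = ∑ σ : Equiv.Perm (Fin n), ∑ τ : Equiv.Perm (Fin n), ((Equiv.Perm.sign τ : ℤ) : ℂ) *
          ∏ i, ((if τ i = i then (1 : ℂ) else 0) - x * (if σ (τ i) = i then 1 else 0)) := by
    refine Finset.sum_congr rfl fun σ _ => ?_
    rw [Matrix.det_apply']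
    refine Finset.sum_congr rfl fun τ _ => ?_
    rw [Finset.prod_congr rfl fun i _ => hent σ τ i]
  -- reindex the inner sum
  have h3 : ∀ τ : Equiv.Perm (Fin n),
      (∑ σ : Equiv.Perm (Fin n),
        ∏ i, ((if τ i = i then (1 : ℂ) else 0) - x * (if σ (τ i) = i then 1 else 0)))
      = ∑ ρ : Equiv.Perm (Fin n),
        ∏ i, ((if τ i = i then (1 : ℂ) else 0) - x * (if ρ i = i then 1 else 0)) := by
    intro τ
    refine (Fintype.sum_equiv (Equiv.mulRight τ⁻¹) _ _ fun ρ => ?_).symm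
    refine Finset.prod_congr rfl fun i _ => ?_
    have hco : (Equiv.mulRight τ⁻¹ ρ) (τ i) = ρ i := by
      simp [Equiv.Perm.mul_apply]
    rw [hco]
  -- expand the product over subsets, and count the ρ's
  have h4 : ∀ τ : Equiv.Perm (Fin n),
      (∑ ρ : Equiv.Perm (Fin n),
        ∏ i, ((if τ i = i then (1 : ℂ) else 0) - x * (if ρ i = i then 1 else 0)))
      = ∑ T ∈ (Finset.univ : Finset (Fin n)).powerset,
          (-x) ^ T.card * ((n - T.card).factorial : ℂ) *
            ∏ i ∈ Finset.univ \ T, (if τ i = i then (1 : ℂ) else 0) := by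
    intro τ
    have e1 : ∀ ρ : Equiv.Perm (Fin n),
        (∏ i, ((if τ i = i then (1 : ℂ) else 0) - x * (if ρ i = i then 1 else 0)))
        = ∑ T ∈ (Finset.univ : Finset (Fin n)).powerset,
            ((-x) ^ T.card * ∏ i ∈ T, (if ρ i = i then (1 : ℂ) else 0)) *
              ∏ i ∈ Finset.univ \ T, (if τ i = i then (1 : ℂ) else 0) := by
      intro ρ
      have := Finset.prod_add (fun i : Fin n => -(x * (if ρ i = i then (1 : ℂ) else 0)))
        (fun i : Fin n => (if τ i = i then (1 : ℂ) else 0)) Finset.univ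
      rw [Finset.prod_congr rfl fun i _ => sub_eq_neg_add
        (if τ i = i then (1 : ℂ) else 0) (x * (if ρ i = i then 1 else 0)), this]
      refine Finset.sum_congr rfl fun T _ => ?_
      congr 1
      rw [Finset.prod_congr rfl fun i _ => (neg_mul x (if ρ i = i then (1 : ℂ) else 0)).symm,
        Finset.prod_mul_distrib, Finset.prod_const]
    rw [Finset.sum_congr rfl fun ρ _ => e1 ρ, Finset.sum_comm]
    refine Finset.sum_congr rfl fun T _ => ?_
    rw [← Finset.sum_mul]
    congr 1
    rw [← Finset.mul_sum]
    congr 1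
    have e2 : ∀ ρ : Equiv.Perm (Fin n),
        (∏ i ∈ T, (if ρ i = i then (1 : ℂ) else 0))
          = (if ∀ i ∈ T, ρ i = i then (1 : ℂ) else 0) := by
      intro ρ
      by_cases h : ∀ i ∈ T, ρ i = i
      · rw [if_pos h]
        exact Finset.prod_eq_one fun i hi => by rw [if_pos (h i hi)]
      · rw [if_neg h]
        push_neg at h
        obtain ⟨i, hi, hne⟩ := h
        exact Finset.prod_eq_zero hi (by rw [if_neg hne])
    rw [Finset.sum_congr rfl fun ρ _ => e2 ρ, count_fixing n T]
  -- put it together and sum the signs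
  have h7 : ∑ σ : Equiv.Perm (Fin n), Matrix.det (1 - x • σ.permMatrix ℂ)
      = ∑ T ∈ (Finset.univ : Finset (Fin n)).powerset,
          (-x) ^ T.card * ((n - T.card).factorial : ℂ) * (if T.card ≤ 1 then 1 else 0) := by
    rw [h1, Finset.sum_comm]
    rw [Finset.sum_congr rfl fun τ _ => by
      rw [← Finset.mul_sum, h3 τ, h4 τ, Finset.mul_sum]]
    rw [Finset.sum_comm]
    refine Finset.sum_congr rfl fun T _ => ?_
    have e3 : ∀ τ : Equiv.Perm (Fin n),
        (∏ i ∈ Finset.univ \ T, (if τ i = i then (1 : ℂ) else 0))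
          = (if ∀ i, i ∉ T → τ i = i then (1 : ℂ) else 0) := by
      intro τ
      by_cases h : ∀ i, i ∉ T → τ i = i
      · rw [if_pos h]
        exact Finset.prod_eq_one fun i hi => by
          rw [if_pos (h i (by simpa using (Finset.mem_sdiff.mp hi).2))]
      · rw [if_neg h]
        push_neg at h
        obtain ⟨i, hi, hne⟩ := h
        exact Finset.prod_eq_zero (Finset.mem_sdiff.mpr ⟨Finset.mem_univ i, hi⟩)
          (by rw [if_neg hne])
    rw [Finset.sum_congr rfl fun τ _ => by rw [e3 τ, mul_comm (((Equiv.Perm.sign τ : ℤ) : ℂ)) _,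
      mul_assoc]]
    rw [← Finset.mul_sum]
    rw [Finset.sum_congr rfl fun τ _ => mul_comm _ (((Equiv.Perm.sign τ : ℤ) : ℂ))]
    rw [sign_sum_fixing n T]
  rw [h7]
  -- the summand only depends on the cardinality
  have h8 : ∑ T ∈ (Finset.univ : Finset (Fin n)).powerset,
        (-x) ^ T.card * ((n - T.card).factorial : ℂ) * (if T.card ≤ 1 then 1 else 0)
      = ∑ j ∈ Finset.range (n + 1),
          (n.choose j) • ((-x) ^ j * ((n - j).factorial : ℂ) * (if j ≤ 1 then 1 else 0)) := by
    rw [Finset.sum_powerset_apply_card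
      (fun k => (-x) ^ k * ((n - k).factorial : ℂ) * (if k ≤ 1 then 1 else 0))]
    simp [Finset.card_univ]
  rw [h8]
  have h9 : ∀ j ∈ Finset.range (n + 1),
      (n.choose j) • ((-x) ^ j * ((n - j).factorial : ℂ) * (if j ≤ 1 then 1 else 0))
        = (if j = 0 then (n.factorial : ℂ) else 0)
          + (if j = 1 then -((n : ℂ) * ((n - 1).factorial : ℂ) * x) else 0) := by
    intro j _
    match j with
    | 0 => simp
    | 1 => simp [Nat.choose_one_right]; ring
    | (k + 2) => simp
  rw [Finset.sum_congr rfl h9, Finset.sum_add_distrib, Finset.sum_ite_eq' (Finset.range (n + 1)) 0,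
    Finset.sum_ite_eq' (Finset.range (n + 1)) 1]
  have h0 : (0 : ℕ) ∈ Finset.range (n + 1) := by simp
  have h1' : (1 : ℕ) ∈ Finset.range (n + 1) := by simp [hn]; omega
  rw [if_pos h0, if_pos h1']
  have hnf : (n : ℂ) * ((n - 1).factorial : ℂ) = (n.factorial : ℂ) := by
    exact_mod_cast congrArg (Nat.cast : ℕ → ℂ) (Nat.mul_factorial_pred (by omega))
  rw [hnf]
  field_simp
  ring
end

section
/- Let θ be a random variable on S^1 and P(x) = ∑_{k=0}^d b_k x^k; set α_k = E[θ^k]. Define for σ of cycle-type λ the function W^2(P)(x)(σ) = ∏_{m=1}^{ℓ(λ)} P(x^{λ_m} ∏_{i=1}^{λ_m} θ_i^{(m)}), where all θ_i^{(m)} are iid copies of θ independent of σ (one per point). Then ∑_{n≥0} E_n[W^2(P)(x)] t^n = ∏_{k=0}^d (1 − α_k x^k t)^{−b_k} for |t| < 1, |x| ≤ 1. -/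
open scoped BigOperators Classical
open MeasureTheory

/-- The cycle representatives of `σ`: the least point of each cycle (including fixed points). -/
noncomputable def cycleReps {n : ℕ} (σ : Equiv.Perm (Fin n)) : Finset (Fin n) :=
  Finset.univ.filter fun i => ∀ j, σ.SameCycle i j → i ≤ j

/-- The cycle of `σ` through `i`, as a finset of points. -/
noncomputable def cycleOf' {n : ℕ} (σ : Equiv.Perm (Fin n)) (i : Fin n) : Finset (Fin n) :=
  Finset.univ.filter fun j => σ.SameCycle i j

namespace Stmt9Aux

open Equiv Finset

variable {n : ℕ}

lemma mem_cycleOf' {σ : Equiv.Perm (Fin n)} {i j : Fin n} :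
    j ∈ cycleOf' σ i ↔ σ.SameCycle i j := by simp [cycleOf']

lemma self_mem_cycleOf' {σ : Equiv.Perm (Fin n)} (i : Fin n) : i ∈ cycleOf' σ i :=
  mem_cycleOf'.2 (Equiv.Perm.SameCycle.refl _ _)

lemma cycleOf'_eq_of_sameCycle {σ : Equiv.Perm (Fin n)} {i j : Fin n}
    (h : σ.SameCycle i j) : cycleOf' σ i = cycleOf' σ j := by
  ext k; simp only [mem_cycleOf']
  exact ⟨fun hk => h.symm.trans hk, fun hk => h.trans hk⟩

lemma sameCycle_of_cycleOf'_eq {σ : Equiv.Perm (Fin n)} {i j : Fin n}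
    (h : cycleOf' σ i = cycleOf' σ j) : σ.SameCycle i j := by
  have := self_mem_cycleOf' (σ := σ) j
  rw [← h, mem_cycleOf'] at this; exact this

lemma cycleOf'_nonempty {σ : Equiv.Perm (Fin n)} (i : Fin n) : (cycleOf' σ i).Nonempty :=
  ⟨i, self_mem_cycleOf' i⟩

/-- The set of cycles of `σ` (as finsets of points). -/
noncomputable def cycSet {n : ℕ} (σ : Equiv.Perm (Fin n)) : Finset (Finset (Fin n)) :=
  Finset.univ.image (cycleOf' σ)

lemma cycleOf'_mem_cycSet {σ : Equiv.Perm (Fin n)} (i : Fin n) :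
    cycleOf' σ i ∈ cycSet σ := Finset.mem_image_of_mem _ (Finset.mem_univ i)

lemma prod_reps_eq {M : Type*} [CommMonoid M] (σ : Equiv.Perm (Fin n))
    (F : Finset (Fin n) → M) :
    ∏ i ∈ cycleReps σ, F (cycleOf' σ i) = ∏ c ∈ cycSet σ, F c := by
  rw [← Finset.prod_image]
  · congr 1
    apply Finset.Subset.antisymm
    · intro c hc
      obtain ⟨i, _, rfl⟩ := Finset.mem_image.1 hc
      exact cycleOf'_mem_cycSet i
    · intro c hc
      obtain ⟨j, _, rfl⟩ := Finset.mem_image.1 hc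
      set i := (cycleOf' σ j).min' (cycleOf'_nonempty j) with hi
      have hmem : i ∈ cycleOf' σ j := Finset.min'_mem _ _
      have hji : σ.SameCycle j i := mem_cycleOf'.1 hmem
      have hrep : i ∈ cycleReps σ := by
        simp only [cycleReps, Finset.mem_filter, Finset.mem_univ, true_and]
        intro k hk
        exact Finset.min'_le _ _ (mem_cycleOf'.2 (hji.trans hk))
      refine Finset.mem_image.2 ⟨i, hrep, ?_⟩
      exact (cycleOf'_eq_of_sameCycle hji).symm
  · intro i hi j hj hij
    have hs : σ.SameCycle i j := sameCycle_of_cycleOf'_eq hij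
    simp only [cycleReps, Finset.mem_coe, Finset.mem_filter, Finset.mem_univ, true_and] at hi hj
    exact le_antisymm (hi j hs) (hj i hs.symm)

end Stmt9Aux
namespace Stmt9Aux
open Equiv Finset
variable {n : ℕ}

lemma sameCycle_ind {α : Type*} [Finite α] {σ : Equiv.Perm α} (R : α → α → Prop)
    (hrefl : ∀ a, R a a) (hstep : ∀ a b, R a b → R a (σ b)) {a b : α}
    (h : σ.SameCycle a b) : R a b := by
  obtain ⟨k, hlt, rfl⟩ := h.exists_pow_eq'
  clear hlt h
  induction k with
  | zero => simpa using hrefl a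
  | succ m ih =>
      rw [pow_succ', Equiv.Perm.mul_apply]
      exact hstep _ _ ih

lemma sameCycle_conj {α : Type*} {c σ : Equiv.Perm α} {i j : α} :
    (c * σ * c⁻¹).SameCycle (c i) (c j) ↔ σ.SameCycle i j := by
  constructor
  · rintro ⟨k, hk⟩
    refine ⟨k, ?_⟩
    have : (c * σ * c⁻¹) ^ k = c * σ ^ k * c⁻¹ := by
      rw [conj_zpow]
    rw [this] at hk
    simpa using hk
  · rintro ⟨k, hk⟩
    refine ⟨k, ?_⟩
    have : (c * σ * c⁻¹) ^ k = c * σ ^ k * c⁻¹ := by rw [conj_zpow]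
    rw [this]
    simp [hk]

lemma cycleOf'_conj {c σ : Equiv.Perm (Fin n)} {i : Fin n} :
    cycleOf' (c * σ * c⁻¹) (c i) = (cycleOf' σ i).image c := by
  ext j
  simp only [mem_cycleOf', Finset.mem_image]
  constructor
  · intro h
    have h' : (c * σ * c⁻¹).SameCycle (c i) (c (c⁻¹ j)) := by simpa using h
    exact ⟨c⁻¹ j, sameCycle_conj.1 h', by simp⟩
  · rintro ⟨a, ha, rfl⟩
    exact sameCycle_conj.2 ha

lemma cycSet_conj {c σ : Equiv.Perm (Fin n)} :
    cycSet (c * σ * c⁻¹) = (cycSet σ).image (Finset.image c) := by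
  apply Finset.Subset.antisymm
  · intro s hs
    obtain ⟨j, _, rfl⟩ := Finset.mem_image.1 hs
    refine Finset.mem_image.2 ⟨cycleOf' σ (c⁻¹ j), cycleOf'_mem_cycSet _, ?_⟩
    rw [← cycleOf'_conj]; simp
  · intro s hs
    obtain ⟨s', hs', rfl⟩ := Finset.mem_image.1 hs
    obtain ⟨i, _, rfl⟩ := Finset.mem_image.1 hs'
    rw [← cycleOf'_conj]
    exact cycleOf'_mem_cycSet _

/-- Marked-cycle weighted sum over permutations. -/
noncomputable def Eg (g h : ℕ → ℂ) (n : ℕ) (q : Fin n) : ℂ :=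
  ∑ τ : Equiv.Perm (Fin n), h (cycleOf' τ q).card *
    ∏ c ∈ (cycSet τ).erase (cycleOf' τ q), g c.card

/-- Total weighted sum over permutations. -/
noncomputable def Zg (g : ℕ → ℂ) (n : ℕ) : ℂ :=
  ∑ σ : Equiv.Perm (Fin n), ∏ c ∈ cycSet σ, g c.card

lemma Eg_const (g h : ℕ → ℂ) (q q' : Fin n) : Eg g h n q = Eg g h n q' := by
  set c : Equiv.Perm (Fin n) := Equiv.swap q q' with hc
  have hcq : c q = q' := Equiv.swap_apply_left _ _
  rw [Eg, Eg]
  refine Fintype.sum_bijective (fun τ => c * τ * c⁻¹) ?_ _ _ ?_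
  · exact (MulAut.conj c).bijective
  · intro τ
    have h1 : cycleOf' (c * τ * c⁻¹) q' = (cycleOf' τ q).image c := by
      rw [← hcq, cycleOf'_conj]
    have hinj : Function.Injective c := c.injective
    rw [h1, Finset.card_image_of_injective _ hinj, cycSet_conj,
      ← Finset.image_erase (Finset.image_injective hinj)]
    rw [Finset.prod_image]
    · simp_rw [Finset.card_image_of_injective _ hinj]
    · intro a _ b _ hab
      exact Finset.image_injective hinj hab

end Stmt9Aux
namespace Stmt9Aux
open Equiv Finset
variable {n : ℕ}

/-! ### decomposeFin and cycles -/

lemma d0_apply_zero (τ : Equiv.Perm (Fin n)) :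
    Equiv.Perm.decomposeFin.symm ((0 : Fin (n+1)), τ) 0 = 0 :=
  Equiv.Perm.decomposeFin_symm_apply_zero _ _

lemma d0_apply_succ (τ : Equiv.Perm (Fin n)) (i : Fin n) :
    Equiv.Perm.decomposeFin.symm ((0 : Fin (n+1)), τ) i.succ = (τ i).succ := by
  rw [Equiv.Perm.decomposeFin_symm_apply_succ, Equiv.swap_self]
  rfl

lemma sp_apply_zero (τ : Equiv.Perm (Fin n)) (p' : Fin n) :
    Equiv.Perm.decomposeFin.symm (p'.succ, τ) 0 = p'.succ :=
  Equiv.Perm.decomposeFin_symm_apply_zero _ _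

lemma sp_apply_succ (τ : Equiv.Perm (Fin n)) (p' : Fin n) (i : Fin n) :
    Equiv.Perm.decomposeFin.symm (p'.succ, τ) i.succ =
      if τ i = p' then 0 else (τ i).succ := by
  rw [Equiv.Perm.decomposeFin_symm_apply_succ]
  rcases eq_or_ne (τ i) p' with h | h
  · rw [h, if_pos rfl, Equiv.swap_apply_right]
  · rw [if_neg h, Equiv.swap_apply_of_ne_of_ne (Fin.succ_ne_zero _)
      (fun hh => h (Fin.succ_injective _ hh))]

/-- Transfer predicate for the case `p = p'.succ`. -/
def Rp (τ : Equiv.Perm (Fin n)) (p' : Fin n) (a b : Fin (n+1)) : Prop :=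
  Fin.cases (Fin.cases True (fun j => τ.SameCycle p' j) b)
    (fun i => Fin.cases (τ.SameCycle i p') (fun j => τ.SameCycle i j) b) a

@[simp] lemma Rp_zero_zero {τ : Equiv.Perm (Fin n)} {p' : Fin n} :
    Rp τ p' 0 0 ↔ True := by simp [Rp]
@[simp] lemma Rp_zero_succ {τ : Equiv.Perm (Fin n)} {p' j : Fin n} :
    Rp τ p' 0 j.succ ↔ τ.SameCycle p' j := by simp [Rp]
@[simp] lemma Rp_succ_zero {τ : Equiv.Perm (Fin n)} {p' i : Fin n} :
    Rp τ p' i.succ 0 ↔ τ.SameCycle i p' := by simp [Rp]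
@[simp] lemma Rp_succ_succ {τ : Equiv.Perm (Fin n)} {p' i j : Fin n} :
    Rp τ p' i.succ j.succ ↔ τ.SameCycle i j := by simp [Rp]

lemma spR {τ : Equiv.Perm (Fin n)} {p' : Fin n} {a b : Fin (n+1)}
    (h : (Equiv.Perm.decomposeFin.symm (p'.succ, τ)).SameCycle a b) : Rp τ p' a b := by
  refine sameCycle_ind (Rp τ p') ?_ ?_ h
  · intro a
    induction a using Fin.cases with
    | zero => simp
    | succ i => simpa using Equiv.Perm.SameCycle.refl τ i
  · intro a b hab
    induction b using Fin.cases with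
    | zero =>
        rw [sp_apply_zero]
        induction a using Fin.cases with
        | zero => simpa using Equiv.Perm.SameCycle.refl τ p'
        | succ i => simp at hab ⊢; exact hab
    | succ j =>
        rw [sp_apply_succ]
        rcases eq_or_ne (τ j) p' with h' | h'
        · rw [if_pos h']
          induction a using Fin.cases with
          | zero => simp
          | succ i =>
              simp only [Rp_succ_succ, Rp_succ_zero] at hab ⊢
              rw [← h']
              exact (Equiv.Perm.sameCycle_apply_right).2 hab
        · rw [if_neg h']
          induction a using Fin.cases with
          | zero =>
              simp only [Rp_zero_succ] at hab ⊢
              exact (Equiv.Perm.sameCycle_apply_right).2 hab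
          | succ i =>
              simp only [Rp_succ_succ] at hab ⊢
              exact (Equiv.Perm.sameCycle_apply_right).2 hab

lemma sp_step (τ : Equiv.Perm (Fin n)) (p' : Fin n) (j : Fin n) :
    (Equiv.Perm.decomposeFin.symm (p'.succ, τ)).SameCycle j.succ (τ j).succ := by
  set σ := Equiv.Perm.decomposeFin.symm (p'.succ, τ) with hσ
  rcases eq_or_ne (τ j) p' with h | h
  · have h1 : σ.SameCycle j.succ 0 := by
      have : σ j.succ = 0 := by rw [hσ, sp_apply_succ, if_pos h]
      rw [← this]
      exact ⟨1, by simp⟩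
    have h2 : σ.SameCycle 0 p'.succ := by
      have : σ 0 = p'.succ := sp_apply_zero _ _
      rw [← this]
      exact ⟨1, by simp⟩
    rw [h]
    exact h1.trans h2
  · have : σ j.succ = (τ j).succ := by rw [hσ, sp_apply_succ, if_neg h]
    rw [← this]
    exact ⟨1, by simp⟩

lemma sp_fwd {τ : Equiv.Perm (Fin n)} {p' : Fin n} {i j : Fin n} (h : τ.SameCycle i j) :
    (Equiv.Perm.decomposeFin.symm (p'.succ, τ)).SameCycle i.succ j.succ := by
  refine sameCycle_ind
    (fun a b => (Equiv.Perm.decomposeFin.symm (p'.succ, τ)).SameCycle a.succ b.succ) ?_ ?_ h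
  · intro a; exact Equiv.Perm.SameCycle.refl _ _
  · intro a b hab
    exact hab.trans (sp_step τ p' b)

lemma sp_succ_succ {τ : Equiv.Perm (Fin n)} {p' i j : Fin n} :
    (Equiv.Perm.decomposeFin.symm (p'.succ, τ)).SameCycle i.succ j.succ ↔ τ.SameCycle i j :=
  ⟨fun h => Rp_succ_succ.1 (spR h), sp_fwd⟩

lemma sp_zero_succ {τ : Equiv.Perm (Fin n)} {p' j : Fin n} :
    (Equiv.Perm.decomposeFin.symm (p'.succ, τ)).SameCycle 0 j.succ ↔ τ.SameCycle p' j := by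
  constructor
  · intro h; exact Rp_zero_succ.1 (spR h)
  · intro h
    have h2 : (Equiv.Perm.decomposeFin.symm (p'.succ, τ)).SameCycle 0 p'.succ := by
      have : Equiv.Perm.decomposeFin.symm (p'.succ, τ) 0 = p'.succ := sp_apply_zero _ _
      rw [← this]; exact ⟨1, by simp⟩
    exact h2.trans (sp_fwd h)

/-- Transfer predicate for the case `p = 0`. -/
def R0 (τ : Equiv.Perm (Fin n)) (a b : Fin (n+1)) : Prop :=
  Fin.cases (Fin.cases True (fun _ => False) b)
    (fun i => Fin.cases False (fun j => τ.SameCycle i j) b) a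

@[simp] lemma R0_zero_zero {τ : Equiv.Perm (Fin n)} : R0 τ 0 0 ↔ True := by simp [R0]
@[simp] lemma R0_zero_succ {τ : Equiv.Perm (Fin n)} {j : Fin n} :
    R0 τ 0 j.succ ↔ False := by simp [R0]
@[simp] lemma R0_succ_zero {τ : Equiv.Perm (Fin n)} {i : Fin n} :
    R0 τ i.succ 0 ↔ False := by simp [R0]
@[simp] lemma R0_succ_succ {τ : Equiv.Perm (Fin n)} {i j : Fin n} :
    R0 τ i.succ j.succ ↔ τ.SameCycle i j := by simp [R0]

lemma s0R {τ : Equiv.Perm (Fin n)} {a b : Fin (n+1)}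
    (h : (Equiv.Perm.decomposeFin.symm ((0 : Fin (n+1)), τ)).SameCycle a b) : R0 τ a b := by
  refine sameCycle_ind (R0 τ) ?_ ?_ h
  · intro a
    induction a using Fin.cases with
    | zero => simp
    | succ i => simpa using Equiv.Perm.SameCycle.refl τ i
  · intro a b hab
    induction b using Fin.cases with
    | zero => rw [d0_apply_zero]; exact hab
    | succ j =>
        rw [d0_apply_succ]
        induction a using Fin.cases with
        | zero => simp at hab
        | succ i =>
            simp only [R0_succ_succ] at hab ⊢
            exact (Equiv.Perm.sameCycle_apply_right).2 hab

lemma s0_fwd {τ : Equiv.Perm (Fin n)} {i j : Fin n} (h : τ.SameCycle i j) :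
    (Equiv.Perm.decomposeFin.symm ((0 : Fin (n+1)), τ)).SameCycle i.succ j.succ := by
  refine sameCycle_ind
    (fun a b => (Equiv.Perm.decomposeFin.symm ((0 : Fin (n+1)), τ)).SameCycle a.succ b.succ)
    ?_ ?_ h
  · intro a; exact Equiv.Perm.SameCycle.refl _ _
  · intro a b hab
    refine hab.trans ?_
    have : Equiv.Perm.decomposeFin.symm ((0 : Fin (n+1)), τ) b.succ = (τ b).succ :=
      d0_apply_succ _ _
    rw [← this]; exact ⟨1, by simp⟩

lemma s0_succ_succ {τ : Equiv.Perm (Fin n)} {i j : Fin n} :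
    (Equiv.Perm.decomposeFin.symm ((0 : Fin (n+1)), τ)).SameCycle i.succ j.succ ↔
      τ.SameCycle i j :=
  ⟨fun h => R0_succ_succ.1 (s0R h), s0_fwd⟩

lemma s0_zero_succ {τ : Equiv.Perm (Fin n)} {j : Fin n} :
    ¬ (Equiv.Perm.decomposeFin.symm ((0 : Fin (n+1)), τ)).SameCycle 0 j.succ :=
  fun h => R0_zero_succ.1 (s0R h)

end Stmt9Aux
namespace Stmt9Aux
set_option maxHeartbeats 1000000
open Equiv Finset
variable {n : ℕ}

lemma c0a (τ : Equiv.Perm (Fin n)) :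
    cycleOf' (Equiv.Perm.decomposeFin.symm ((0 : Fin (n+1)), τ)) 0 = {0} := by
  ext j
  simp only [mem_cycleOf', Finset.mem_singleton]
  induction j using Fin.cases with
  | zero => simp [Equiv.Perm.SameCycle.refl]
  | succ j =>
      exact iff_of_false s0_zero_succ (Fin.succ_ne_zero j)

lemma c0b (τ : Equiv.Perm (Fin n)) (i : Fin n) :
    cycleOf' (Equiv.Perm.decomposeFin.symm ((0 : Fin (n+1)), τ)) i.succ =
      (cycleOf' τ i).image Fin.succ := by
  ext j
  simp only [mem_cycleOf', Finset.mem_image]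
  induction j using Fin.cases with
  | zero =>
      constructor
      · intro h; exact absurd h.symm s0_zero_succ
      · rintro ⟨a, _, ha⟩; exact absurd ha (Fin.succ_ne_zero a)
  | succ j =>
      rw [s0_succ_succ]
      constructor
      · intro h; exact ⟨j, h, rfl⟩
      · rintro ⟨a, ha, haj⟩
        rw [← Fin.succ_injective _ haj]
        exact ha

lemma cs0 (τ : Equiv.Perm (Fin n)) :
    (cycSet (Equiv.Perm.decomposeFin.symm ((0 : Fin (n+1)), τ))).erase
        (cycleOf' (Equiv.Perm.decomposeFin.symm ((0 : Fin (n+1)), τ)) 0) =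
      (cycSet τ).image (Finset.image Fin.succ) := by
  apply Finset.Subset.antisymm
  · intro s hs
    obtain ⟨hne, hmem⟩ := Finset.mem_erase.1 hs
    obtain ⟨a, _, rfl⟩ := Finset.mem_image.1 hmem
    induction a using Fin.cases with
    | zero => exact absurd rfl hne
    | succ i =>
        rw [c0b]
        exact Finset.mem_image_of_mem _ (cycleOf'_mem_cycSet i)
  · intro s hs
    obtain ⟨s', hs', rfl⟩ := Finset.mem_image.1 hs
    obtain ⟨i, _, rfl⟩ := Finset.mem_image.1 hs'
    rw [← c0b]
    refine Finset.mem_erase.2 ⟨?_, cycleOf'_mem_cycSet _⟩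
    intro heq
    have hmem := self_mem_cycleOf'
      (σ := Equiv.Perm.decomposeFin.symm ((0 : Fin (n+1)), τ)) i.succ
    rw [heq, c0a, Finset.mem_singleton] at hmem
    exact Fin.succ_ne_zero i hmem

lemma cpa (τ : Equiv.Perm (Fin n)) (p' : Fin n) :
    cycleOf' (Equiv.Perm.decomposeFin.symm (p'.succ, τ)) 0 =
      insert 0 ((cycleOf' τ p').image Fin.succ) := by
  ext j
  simp only [mem_cycleOf', Finset.mem_insert, Finset.mem_image]
  induction j using Fin.cases with
  | zero => simp [Equiv.Perm.SameCycle.refl]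
  | succ j =>
      rw [sp_zero_succ]
      simp only [(Fin.succ_ne_zero j), false_or]
      constructor
      · intro h; exact ⟨j, h, rfl⟩
      · rintro ⟨a, ha, haj⟩
        rw [← Fin.succ_injective _ haj]
        exact ha

lemma cpb (τ : Equiv.Perm (Fin n)) (p' : Fin n) {i : Fin n} (h : ¬ τ.SameCycle p' i) :
    cycleOf' (Equiv.Perm.decomposeFin.symm (p'.succ, τ)) i.succ =
      (cycleOf' τ i).image Fin.succ := by
  ext j
  simp only [mem_cycleOf', Finset.mem_image]
  induction j using Fin.cases with
  | zero =>
      constructor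
      · intro hij
        exact (h (sp_zero_succ.1 hij.symm)).elim
      · rintro ⟨a, _, ha⟩; exact absurd ha (Fin.succ_ne_zero a)
  | succ j =>
      rw [sp_succ_succ]
      constructor
      · intro hij; exact ⟨j, hij, rfl⟩
      · rintro ⟨a, ha, haj⟩
        rw [← Fin.succ_injective _ haj]
        exact ha

lemma csp (τ : Equiv.Perm (Fin n)) (p' : Fin n) :
    (cycSet (Equiv.Perm.decomposeFin.symm (p'.succ, τ))).erase
        (cycleOf' (Equiv.Perm.decomposeFin.symm (p'.succ, τ)) 0) =
      ((cycSet τ).erase (cycleOf' τ p')).image (Finset.image Fin.succ) := by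
  set σ := Equiv.Perm.decomposeFin.symm (p'.succ, τ) with hσ
  apply Finset.Subset.antisymm
  · intro s hs
    obtain ⟨hne, hmem⟩ := Finset.mem_erase.1 hs
    obtain ⟨a, _, rfl⟩ := Finset.mem_image.1 hmem
    induction a using Fin.cases with
    | zero => exact absurd rfl hne
    | succ i =>
        have hnc : ¬ τ.SameCycle p' i := by
          intro hc
          exact hne (cycleOf'_eq_of_sameCycle (sp_zero_succ.2 hc)).symm
        rw [cpb τ p' hnc]
        refine Finset.mem_image_of_mem _ (Finset.mem_erase.2 ⟨?_, cycleOf'_mem_cycSet i⟩)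
        intro heq
        exact hnc (sameCycle_of_cycleOf'_eq heq).symm
  · intro s hs
    obtain ⟨s', hs', rfl⟩ := Finset.mem_image.1 hs
    obtain ⟨hne, hmem⟩ := Finset.mem_erase.1 hs'
    obtain ⟨i, _, rfl⟩ := Finset.mem_image.1 hmem
    have hnc : ¬ τ.SameCycle p' i := fun hc => hne (cycleOf'_eq_of_sameCycle hc).symm
    rw [← cpb τ p' hnc]
    refine Finset.mem_erase.2 ⟨?_, cycleOf'_mem_cycSet _⟩
    intro heq
    have hmem0 := self_mem_cycleOf' (σ := σ) i.succ
    rw [heq] at hmem0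
    have : σ.SameCycle 0 i.succ := mem_cycleOf'.1 hmem0
    exact hnc (sp_zero_succ.1 this)

lemma card_cpa (τ : Equiv.Perm (Fin n)) (p' : Fin n) :
    (cycleOf' (Equiv.Perm.decomposeFin.symm (p'.succ, τ)) 0).card =
      (cycleOf' τ p').card + 1 := by
  rw [cpa, Finset.card_insert_of_notMem, Finset.card_image_of_injective _ (Fin.succ_injective n)]
  intro hmem
  obtain ⟨a, _, ha⟩ := Finset.mem_image.1 hmem
  exact Fin.succ_ne_zero a ha

lemma Zg_zero (g : ℕ → ℂ) : Zg g 0 = 1 := by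
  rw [Zg]
  rw [Fintype.sum_eq_single 1]
  · have : cycSet (1 : Equiv.Perm (Fin 0)) = ∅ := by
      simp [cycSet]
    rw [this, Finset.prod_empty]
  · intro σ hσ
    exact absurd (Subsingleton.elim σ 1) hσ

lemma Zg_eq_Eg (g : ℕ → ℂ) (n : ℕ) : Zg g (n+1) = Eg g g (n+1) 0 := by
  rw [Zg, Eg]
  refine Finset.sum_congr rfl fun σ _ => ?_
  exact (Finset.mul_prod_erase _ _ (cycleOf'_mem_cycSet 0)).symm

lemma prod_image_succ (g : ℕ → ℂ) (s : Finset (Finset (Fin n))) :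
    ∏ c ∈ s.image (Finset.image Fin.succ), g c.card = ∏ c ∈ s, g c.card := by
  rw [Finset.prod_image]
  · refine Finset.prod_congr rfl fun c _ => ?_
    rw [Finset.card_image_of_injective _ (Fin.succ_injective n)]
  · intro a _ b _ hab
    exact Finset.image_injective (Fin.succ_injective n) hab

lemma Eg_rec (g h : ℕ → ℂ) (n : ℕ) :
    Eg g h (n+1) 0 = h 1 * Zg g n + ∑ p' : Fin n, Eg g (fun m => h (m+1)) n p' := by
  rw [Eg, ← Equiv.sum_comp (Equiv.Perm.decomposeFin (n := n)).symm, Fintype.sum_prod_type,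
    Fin.sum_univ_succ]
  congr 1
  · rw [Zg, Finset.mul_sum]
    refine Finset.sum_congr rfl fun τ _ => ?_
    rw [cs0, c0a, prod_image_succ]
    simp
  · refine Finset.sum_congr rfl fun p' _ => ?_
    rw [Eg]
    refine Finset.sum_congr rfl fun τ _ => ?_
    rw [card_cpa, csp, prod_image_succ]

lemma Eg_unroll (g : ℕ → ℂ) : ∀ (n : ℕ) (h : ℕ → ℂ),
    Eg g h (n+1) 0 = ∑ m ∈ Finset.range (n+1),
      (n.descFactorial m : ℂ) * h (m+1) * Zg g (n-m) := by
  intro n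
  induction n with
  | zero =>
      intro h
      rw [Eg_rec]
      simp
  | succ k ih =>
      intro h
      rw [Eg_rec]
      have hconst : ∀ p' : Fin (k+1), Eg g (fun m => h (m+1)) (k+1) p' =
          Eg g (fun m => h (m+1)) (k+1) 0 := fun p' => Eg_const _ _ p' 0
      rw [Fintype.sum_congr (fun p' => Eg g (fun m => h (m+1)) (k+1) p')
        (fun _ => Eg g (fun m => h (m+1)) (k+1) 0) hconst,
        Finset.sum_const, Finset.card_univ, Fintype.card_fin, ih (fun m => h (m+1))]
      conv_rhs => rw [Finset.sum_range_succ']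
      rw [add_comm]
      congr 1
      · rw [nsmul_eq_mul, Finset.mul_sum]
        refine Finset.sum_congr rfl fun m _ => ?_
        rw [Nat.succ_descFactorial_succ, Nat.succ_sub_succ]
        push_cast
        ring
      · simp

lemma Zg_rec (g : ℕ → ℂ) (n : ℕ) :
    Zg g (n+1) = ∑ m ∈ Finset.range (n+1),
      (n.descFactorial m : ℂ) * g (m+1) * Zg g (n-m) := by
  rw [Zg_eq_Eg, Eg_unroll]

end Stmt9Aux
namespace Stmt9Aux
open Finset

/-- Polynomial-times-geometric series are summable. -/
lemma summable_poly_geom (K : ℕ) {r : ℝ} (h0 : 0 ≤ r) (hr : r < 1) :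
    Summable (fun n : ℕ => ((n : ℝ) + 1) ^ K * r ^ n) := by
  have hr' : ‖r‖ < 1 := by rwa [Real.norm_eq_abs, abs_of_nonneg h0]
  have hsum : ∀ j : ℕ, Summable (fun n : ℕ => ((K.choose j : ℝ)) * ((n : ℝ) ^ j * r ^ n)) :=
    fun j => (summable_pow_mul_geometric_of_norm_lt_one j hr').mul_left _
  have : Summable (fun n : ℕ => ∑ j ∈ Finset.range (K + 1),
      ((K.choose j : ℝ)) * ((n : ℝ) ^ j * r ^ n)) :=
    summable_sum (fun j _ => hsum j)
  refine this.congr fun n => ?_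
  rw [add_pow, Finset.sum_mul]
  refine Finset.sum_congr rfl fun j _ => ?_
  rw [one_pow]
  ring

variable {d : ℕ} {b z : ℕ → ℂ}

/-- The main analytic lemma. -/
lemma analytic_main (d : ℕ) (b z : ℕ → ℂ) (hz : ∀ k, k ∈ Finset.range (d+1) → ‖z k‖ ≤ 1)
    (a : ℕ → ℂ) (ha0 : a 0 = 1)
    (harec : ∀ n : ℕ, ((n : ℂ) + 1) * a (n+1) = ∑ m ∈ Finset.range (n+1),
      (∑ k ∈ Finset.range (d+1), b k * z k ^ (m+1)) * a (n-m))
    (t : ℂ) (ht : ‖t‖ < 1) :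
    HasSum (fun n : ℕ => a n * t ^ n)
      (∏ k ∈ Finset.range (d+1), (1 - z k * t) ^ (-(b k))) := by
  classical
  set g : ℕ → ℂ := fun m => ∑ k ∈ Finset.range (d+1), b k * z k ^ m with hgdef
  set C : ℝ := ∑ k ∈ Finset.range (d+1), ‖b k‖ with hCdef
  have hC0 : 0 ≤ C := Finset.sum_nonneg fun k _ => norm_nonneg _
  have hgb : ∀ m : ℕ, ‖g m‖ ≤ C := by
    intro m
    refine (norm_sum_le _ _).trans ?_
    refine Finset.sum_le_sum fun k hk => ?_
    rw [norm_mul]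
    have : ‖z k ^ m‖ ≤ 1 := by
      rw [norm_pow]
      exact pow_le_one₀ (norm_nonneg _) (hz k hk)
    calc ‖b k‖ * ‖z k ^ m‖ ≤ ‖b k‖ * 1 := by
          exact mul_le_mul_of_nonneg_left this (norm_nonneg _)
      _ = ‖b k‖ := mul_one _
  set K : ℕ := ⌈C⌉₊ with hKdef
  have hCK : C ≤ (K : ℝ) := Nat.le_ceil C
  -- growth bound on partial sums of ‖a‖
  have hT : ∀ n : ℕ, (∑ j ∈ Finset.range (n+1), ‖a j‖) ≤ ((n : ℝ) + 1) ^ K := by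
    intro n
    induction n with
    | zero => simpa [ha0] using le_refl (1 : ℝ)
    | succ n ih =>
        have hTn0 : 0 ≤ ∑ j ∈ Finset.range (n+1), ‖a j‖ :=
          Finset.sum_nonneg fun j _ => norm_nonneg _
        have hpos : (0 : ℝ) < (n : ℝ) + 1 := by positivity
        have h1 : ((n : ℝ) + 1) * ‖a (n+1)‖ ≤ C * ∑ j ∈ Finset.range (n+1), ‖a j‖ := by
          have := harec n
          have hnorm : ‖((n : ℂ) + 1) * a (n+1)‖ = ((n : ℝ) + 1) * ‖a (n+1)‖ := by
            rw [norm_mul]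
            congr 1
            have : ((n : ℂ) + 1) = ((n + 1 : ℕ) : ℂ) := by push_cast; ring
            rw [this, Complex.norm_natCast]
            push_cast; ring
          calc ((n : ℝ) + 1) * ‖a (n+1)‖ = ‖((n : ℂ) + 1) * a (n+1)‖ := hnorm.symm
            _ = ‖∑ m ∈ Finset.range (n+1), g (m+1) * a (n-m)‖ := by rw [this]
            _ ≤ ∑ m ∈ Finset.range (n+1), ‖g (m+1) * a (n-m)‖ := norm_sum_le _ _
            _ ≤ ∑ m ∈ Finset.range (n+1), C * ‖a (n-m)‖ := by
                refine Finset.sum_le_sum fun m _ => ?_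
                rw [norm_mul]
                exact mul_le_mul_of_nonneg_right (hgb (m+1)) (norm_nonneg _)
            _ = C * ∑ m ∈ Finset.range (n+1), ‖a (n-m)‖ := by rw [Finset.mul_sum]
            _ = C * ∑ j ∈ Finset.range (n+1), ‖a j‖ := by
                congr 1
                have := Finset.sum_range_reflect (fun j => ‖a j‖) (n+1)
                simpa using this
        have h2 : ‖a (n+1)‖ ≤ (K : ℝ) * ((n : ℝ) + 1) ^ K / ((n : ℝ) + 1) := by
          rw [le_div_iff₀ hpos, mul_comm ‖a (n+1)‖]
          calc ((n : ℝ) + 1) * ‖a (n+1)‖ ≤ C * ∑ j ∈ Finset.range (n+1), ‖a j‖ := h1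
            _ ≤ (K : ℝ) * ((n : ℝ) + 1) ^ K := by
                exact mul_le_mul hCK ih hTn0 (Nat.cast_nonneg _)
        have hbern : 1 + (K : ℝ) / ((n : ℝ) + 1) ≤ (1 + 1 / ((n : ℝ) + 1)) ^ K := by
          have hge : (-2 : ℝ) ≤ 1 / ((n : ℝ) + 1) := by
            have : (0:ℝ) ≤ 1 / ((n : ℝ) + 1) := by positivity
            linarith
          have := one_add_mul_le_pow hge K
          calc 1 + (K : ℝ) / ((n : ℝ) + 1) = 1 + (K : ℝ) * (1 / ((n : ℝ) + 1)) := by ring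
            _ ≤ (1 + 1 / ((n : ℝ) + 1)) ^ K := this
        have hfin : ((n : ℝ) + 1) ^ K * (1 + 1 / ((n : ℝ) + 1)) ^ K = ((n : ℝ) + 2) ^ K := by
          rw [← mul_pow]
          congr 1
          field_simp
          try ring
        rw [Finset.sum_range_succ]
        have : ((n : ℝ) + 1 + 1) = ((n : ℝ) + 2) := by ring
        rw [Nat.cast_succ, this]
        calc (∑ j ∈ Finset.range (n+1), ‖a j‖) + ‖a (n+1)‖
            ≤ ((n : ℝ) + 1) ^ K + (K : ℝ) * ((n : ℝ) + 1) ^ K / ((n : ℝ) + 1) :=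
              add_le_add ih h2
          _ = ((n : ℝ) + 1) ^ K * (1 + (K : ℝ) / ((n : ℝ) + 1)) := by ring
          _ ≤ ((n : ℝ) + 1) ^ K * (1 + 1 / ((n : ℝ) + 1)) ^ K :=
              mul_le_mul_of_nonneg_left hbern (by positivity)
          _ = ((n : ℝ) + 2) ^ K := hfin
  have habound : ∀ n : ℕ, ‖a n‖ ≤ ((n : ℝ) + 1) ^ K := by
    intro n
    refine le_trans ?_ (hT n)
    exact Finset.single_le_sum (fun j _ => norm_nonneg (a j))
      (Finset.self_mem_range_succ n)
  -- summability of the main series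
  have hsummable : ∀ u : ℂ, ‖u‖ < 1 → Summable (fun n : ℕ => a n * u ^ n) := by
    intro u hu
    refine Summable.of_norm_bounded (g := fun n => ((n : ℝ) + 1) ^ K * ‖u‖ ^ n)
      (summable_poly_geom K (norm_nonneg u) hu) fun n => ?_
    rw [norm_mul, norm_pow]
    exact mul_le_mul_of_nonneg_right (habound n) (by positivity)
  set A : ℂ → ℂ := fun u => ∑' n : ℕ, a n * u ^ n with hAdef
  set ρ : ℝ := (1 + ‖t‖) / 2 with hρdef
  have hρ1 : ρ < 1 := by rw [hρdef]; linarith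
  have hρt : ‖t‖ < ρ := by rw [hρdef]; linarith
  have hρ0 : 0 < ρ := by rw [hρdef]; positivity
  set s : Set ℂ := Metric.ball (0 : ℂ) ρ with hsdef
  have hmem : ∀ u : ℂ, u ∈ s → ‖u‖ < ρ := by
    intro u hu; rwa [hsdef, Metric.mem_ball, dist_zero_right] at hu
  have hmem1 : ∀ u : ℂ, u ∈ s → ‖u‖ < 1 := fun u hu => lt_trans (hmem u hu) hρ1
  have hts : t ∈ s := by rw [hsdef, Metric.mem_ball, dist_zero_right]; exact hρt
  have h0s : (0 : ℂ) ∈ s := by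
    rw [hsdef, Metric.mem_ball, dist_zero_right, norm_zero]; exact hρ0
  -- summable derivative bound
  have hUsum : Summable (fun n : ℕ => (n : ℝ) * ((n : ℝ) + 1) ^ K * ρ ^ (n - 1)) := by
    rw [← summable_nat_add_iff 1]
    have hbase := (summable_poly_geom (K + 1) (le_of_lt hρ0) hρ1).mul_left ((2 : ℝ) ^ K)
    refine Summable.of_nonneg_of_le (fun m => by positivity) (fun m => ?_) hbase
    simp only [Nat.add_sub_cancel]
    push_cast
    have h1 : ((m : ℝ) + 1 + 1) ^ K ≤ (2 * ((m : ℝ) + 1)) ^ K := by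
      refine pow_le_pow_left₀ (by positivity) (by linarith) K
    calc ((m : ℝ) + 1) * ((m : ℝ) + 1 + 1) ^ K * ρ ^ m
        ≤ ((m : ℝ) + 1) * (2 * ((m : ℝ) + 1)) ^ K * ρ ^ m := by
          have hρm : (0 : ℝ) ≤ ρ ^ m := by positivity
          exact mul_le_mul_of_nonneg_right
            (mul_le_mul_of_nonneg_left h1 (by positivity)) hρm
      _ = (2 : ℝ) ^ K * (((m : ℝ) + 1) ^ (K + 1) * ρ ^ m) := by
          rw [mul_pow]; ring
  -- derivative of A on s
  have hAd : ∀ u : ℂ, u ∈ s →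
      HasDerivAt A (∑' n : ℕ, a n * ((n : ℂ) * u ^ (n - 1))) u := by
    intro u hu
    refine hasDerivAt_tsum_of_isPreconnected hUsum Metric.isOpen_ball
      (convex_ball _ _).isPreconnected
      (fun n y _ => (hasDerivAt_pow n y).const_mul (a n)) ?_ h0s ?_ hu
    · intro n y hy
      rw [norm_mul, norm_mul, norm_pow, Complex.norm_natCast]
      calc ‖a n‖ * ((n : ℝ) * ‖y‖ ^ (n - 1))
          ≤ ((n : ℝ) + 1) ^ K * ((n : ℝ) * ρ ^ (n - 1)) := by
            refine mul_le_mul (habound n) ?_ (by positivity) (by positivity)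
            exact mul_le_mul_of_nonneg_left
              (pow_le_pow_left₀ (norm_nonneg _) (le_of_lt (hmem y hy)) _)
              (Nat.cast_nonneg _)
        _ = (n : ℝ) * ((n : ℝ) + 1) ^ K * ρ ^ (n - 1) := by ring
    · exact hsummable 0 (by rw [norm_zero]; exact one_pos)
  -- rewrite the derivative
  have hshift : ∀ u : ℂ, ‖u‖ < 1 →
      (∑' n : ℕ, a n * ((n : ℂ) * u ^ (n - 1))) =
        ∑' n : ℕ, ((n : ℂ) + 1) * a (n+1) * u ^ n := by
    intro u hu
    have hsum : Summable (fun n : ℕ => a n * ((n : ℂ) * u ^ (n - 1))) := by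
      refine Summable.of_norm_bounded
        (g := fun n => (n : ℝ) * ((n : ℝ) + 1) ^ K * ‖u‖ ^ (n - 1)) ?_ fun n => ?_
      · -- same argument as hUsum with ρ replaced by ‖u‖
        rcases le_or_gt 0 (‖u‖) with h0u | h0u
        · rw [← summable_nat_add_iff 1]
          have hbase := (summable_poly_geom (K + 1) h0u hu).mul_left ((2 : ℝ) ^ K)
          refine Summable.of_nonneg_of_le (fun m => by positivity) (fun m => ?_) hbase
          simp only [Nat.add_sub_cancel]
          push_cast
          have h1 : ((m : ℝ) + 1 + 1) ^ K ≤ (2 * ((m : ℝ) + 1)) ^ K :=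
            pow_le_pow_left₀ (by positivity) (by linarith) K
          calc ((m : ℝ) + 1) * ((m : ℝ) + 1 + 1) ^ K * ‖u‖ ^ m
              ≤ ((m : ℝ) + 1) * (2 * ((m : ℝ) + 1)) ^ K * ‖u‖ ^ m := by
                exact mul_le_mul_of_nonneg_right
                  (mul_le_mul_of_nonneg_left h1 (by positivity)) (by positivity)
            _ = (2 : ℝ) ^ K * (((m : ℝ) + 1) ^ (K + 1) * ‖u‖ ^ m) := by
                rw [mul_pow]; ring
        · exact absurd (norm_nonneg u) (not_le.2 h0u)
      · rw [norm_mul, norm_mul, norm_pow, Complex.norm_natCast]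
        calc ‖a n‖ * ((n : ℝ) * ‖u‖ ^ (n - 1))
            ≤ ((n : ℝ) + 1) ^ K * ((n : ℝ) * ‖u‖ ^ (n - 1)) :=
              mul_le_mul_of_nonneg_right (habound n) (by positivity)
          _ = (n : ℝ) * ((n : ℝ) + 1) ^ K * ‖u‖ ^ (n - 1) := by ring
    rw [Summable.tsum_eq_zero_add hsum]
    simp only [Nat.cast_zero, zero_mul, mul_zero, zero_add]
    refine tsum_congr fun n => ?_
    rw [Nat.add_sub_cancel]
    push_cast
    ring
  -- Cauchy product identity
  have hgeom_sum : ∀ u : ℂ, ‖u‖ < 1 → Summable (fun m : ℕ => ‖g (m+1) * u ^ m‖) := by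
    intro u hu
    refine Summable.of_nonneg_of_le (fun m => norm_nonneg _) (fun m => ?_)
      ((summable_geometric_of_lt_one (norm_nonneg u) hu).mul_left C)
    rw [norm_mul, norm_pow]
    exact mul_le_mul_of_nonneg_right (hgb (m+1)) (by positivity)
  have hcauchy : ∀ u : ℂ, ‖u‖ < 1 →
      (∑' n : ℕ, ((n : ℂ) + 1) * a (n+1) * u ^ n) =
        (∑' m : ℕ, g (m+1) * u ^ m) * A u := by
    intro u hu
    have hf : Summable fun m : ℕ => ‖g (m+1) * u ^ m‖ := hgeom_sum u hu
    have hg' : Summable fun n : ℕ => ‖a n * u ^ n‖ := by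
      refine Summable.of_nonneg_of_le (fun n => norm_nonneg _) (fun n => ?_)
        (summable_poly_geom K (norm_nonneg u) hu)
      rw [norm_mul, norm_pow]
      exact mul_le_mul_of_nonneg_right (habound n) (by positivity)
    rw [hAdef]
    rw [tsum_mul_tsum_eq_tsum_sum_range_of_summable_norm hf hg']
    refine (tsum_congr fun n => ?_).symm
    calc (∑ m ∈ Finset.range (n+1), g (m+1) * u ^ m * (a (n - m) * u ^ (n - m)))
        = ∑ m ∈ Finset.range (n+1), g (m+1) * a (n - m) * u ^ n := by
          refine Finset.sum_congr rfl fun m hm => ?_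
          have hmn : m ≤ n := Nat.lt_succ_iff.1 (Finset.mem_range.1 hm)
          rw [show u ^ n = u ^ m * u ^ (n - m) by
            rw [← pow_add, Nat.add_sub_cancel' hmn]]
          ring
      _ = (∑ m ∈ Finset.range (n+1), g (m+1) * a (n - m)) * u ^ n := by
          rw [Finset.sum_mul]
      _ = ((n : ℂ) + 1) * a (n+1) * u ^ n := by rw [← harec n]
  -- closed form of the logarithmic-derivative series
  have hval : ∀ u : ℂ, ‖u‖ < 1 →
      (∑' m : ℕ, g (m+1) * u ^ m) =
        ∑ k ∈ Finset.range (d+1), b k * z k * (1 - z k * u)⁻¹ := by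
    intro u hu
    have hzu : ∀ k, k ∈ Finset.range (d+1) → ‖z k * u‖ < 1 := by
      intro k hk
      rw [norm_mul]
      calc ‖z k‖ * ‖u‖ ≤ 1 * ‖u‖ :=
            mul_le_mul_of_nonneg_right (hz k hk) (norm_nonneg _)
        _ = ‖u‖ := one_mul _
        _ < 1 := hu
    have hterm : ∀ k, k ∈ Finset.range (d+1) →
        Summable (fun m : ℕ => b k * z k * (z k * u) ^ m) := by
      intro k hk
      exact (summable_geometric_of_norm_lt_one (hzu k hk)).mul_left _
    calc (∑' m : ℕ, g (m+1) * u ^ m)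
        = ∑' m : ℕ, ∑ k ∈ Finset.range (d+1), b k * z k * (z k * u) ^ m := by
          refine tsum_congr fun m => ?_
          rw [hgdef, Finset.sum_mul]
          refine Finset.sum_congr rfl fun k _ => ?_
          rw [mul_pow, pow_succ]
          ring
      _ = ∑ k ∈ Finset.range (d+1), ∑' m : ℕ, b k * z k * (z k * u) ^ m :=
          Summable.tsum_finsetSum hterm
      _ = ∑ k ∈ Finset.range (d+1), b k * z k * (1 - z k * u)⁻¹ := by
          refine Finset.sum_congr rfl fun k hk => ?_
          rw [tsum_mul_left, tsum_geometric_of_norm_lt_one (hzu k hk)]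
  -- the product function G
  set G : ℂ → ℂ := fun u => ∏ k ∈ Finset.range (d+1), (1 - z k * u) ^ (b k) with hGdef
  have hne : ∀ u : ℂ, ‖u‖ < 1 → ∀ k, k ∈ Finset.range (d+1) → (1 - z k * u) ≠ 0 := by
    intro u hu k hk h0
    have h1 : (1 : ℂ) = z k * u := by
      have := sub_eq_zero.1 h0; exact this
    have : (1 : ℝ) < 1 := by
      calc (1 : ℝ) = ‖(1 : ℂ)‖ := by simp
        _ = ‖z k * u‖ := by rw [h1]
        _ ≤ ‖z k‖ * ‖u‖ := le_of_eq (norm_mul _ _)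
        _ ≤ 1 * ‖u‖ := mul_le_mul_of_nonneg_right (hz k hk) (norm_nonneg _)
        _ = ‖u‖ := one_mul _
        _ < 1 := hu
    exact absurd this (lt_irrefl _)
  have hslit : ∀ u : ℂ, ‖u‖ < 1 → ∀ k, k ∈ Finset.range (d+1) →
      (1 - z k * u) ∈ Complex.slitPlane := by
    intro u hu k hk
    rw [Complex.mem_slitPlane_iff]
    left
    have h1 : ‖z k * u‖ < 1 := by
      rw [norm_mul]
      calc ‖z k‖ * ‖u‖ ≤ 1 * ‖u‖ :=
            mul_le_mul_of_nonneg_right (hz k hk) (norm_nonneg _)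
        _ = ‖u‖ := one_mul _
        _ < 1 := hu
    have h2 : (z k * u).re ≤ ‖z k * u‖ := Complex.re_le_norm _
    simp only [Complex.sub_re, Complex.one_re]
    linarith
  have hGd : ∀ u : ℂ, u ∈ s →
      HasDerivAt G (-(∑ k ∈ Finset.range (d+1), b k * z k * (1 - z k * u)⁻¹) * G u) u := by
    intro u hu
    have hu1 := hmem1 u hu
    have hfac : ∀ k, k ∈ Finset.range (d+1) →
        HasDerivAt (fun v : ℂ => (1 - z k * v) ^ (b k))
          (b k * (1 - z k * u) ^ (b k - 1) * (-(z k * 1))) u := by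
      intro k hk
      have hbase : HasDerivAt (fun v : ℂ => 1 - z k * v) (-(z k * 1)) u :=
        ((hasDerivAt_id u).const_mul (z k)).const_sub 1
      exact hbase.cpow_const (hslit u hu1 k hk)
    have hprod := HasDerivAt.fun_finsetProd (u := Finset.range (d+1)) hfac
    have key : (∑ k ∈ Finset.range (d+1), (∏ j ∈ (Finset.range (d+1)).erase k,
          (1 - z j * u) ^ (b j)) • (b k * (1 - z k * u) ^ (b k - 1) * (-(z k * 1)))) =
        -(∑ k ∈ Finset.range (d+1), b k * z k * (1 - z k * u)⁻¹) * G u := by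
      rw [neg_mul, Finset.sum_mul, ← Finset.sum_neg_distrib]
      refine Finset.sum_congr rfl fun k hk => ?_
      have hnek := hne u hu1 k hk
      have hpe : (∏ j ∈ (Finset.range (d+1)).erase k, (1 - z j * u) ^ (b j)) *
          (1 - z k * u) ^ (b k) = G u := Finset.prod_erase_mul _ _ hk
      rw [smul_eq_mul, Complex.cpow_sub _ _ hnek, Complex.cpow_one]
      linear_combination (-(b k * z k * (1 - z k * u)⁻¹)) * hpe
    exact key ▸ hprod
  -- q := A * G is locally constant
  have hq : ∀ u, u ∈ s → HasDerivAt (fun v => A v * G v) 0 u := by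
    intro u hu
    have h3 := (hAd u hu).mul (hGd u hu)
    have hzero : (∑' n : ℕ, a n * ((n : ℂ) * u ^ (n - 1))) * G u +
        A u * (-(∑ k ∈ Finset.range (d+1), b k * z k * (1 - z k * u)⁻¹) * G u) = 0 := by
      rw [hshift u (hmem1 u hu), hcauchy u (hmem1 u hu), hval u (hmem1 u hu)]
      ring
    exact hzero ▸ h3
  have hconst : A t * G t = A 0 * G 0 := by
    refine (convex_ball (0:ℂ) ρ).is_const_of_fderivWithin_eq_zero
      (𝕜 := ℂ) (f := fun v => A v * G v) ?_ ?_ hts h0s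
    · intro u hu
      exact ((hq u hu).differentiableAt).differentiableWithinAt
    · intro u hu
      rw [fderivWithin_of_isOpen Metric.isOpen_ball hu, (hq u hu).hasFDerivAt.fderiv]
      ext
      simp
  have hA0 : A 0 = 1 := by
    rw [hAdef]
    show (∑' n : ℕ, a n * (0:ℂ) ^ n) = 1
    have : ∑' n : ℕ, a n * (0:ℂ) ^ n = a 0 * (0:ℂ) ^ 0 := by
      refine tsum_eq_single 0 fun n hn => ?_
      rw [zero_pow hn, mul_zero]
    rw [this, pow_zero, ha0, mul_one]
  have hG0 : G 0 = 1 := by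
    rw [hGdef]
    refine Finset.prod_eq_one fun k _ => ?_
    rw [mul_zero, sub_zero, Complex.one_cpow]
  have hGt : G t ≠ 0 := by
    rw [hGdef]
    refine Finset.prod_ne_zero_iff.2 fun k hk => ?_
    intro h0
    rcases (Complex.cpow_eq_zero_iff _ _).1 h0 with ⟨hb, _⟩
    exact hne t ht k hk hb
  have h1 : A t * G t = 1 := by rw [hconst, hA0, hG0, mul_one]
  have hAt : A t = (G t)⁻¹ := by
    rw [inv_eq_one_div, eq_div_iff hGt]
    exact h1
  have hfinal : (∏ k ∈ Finset.range (d+1), (1 - z k * t) ^ (-(b k))) = A t := by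
    rw [hAt, hGdef, ← Finset.prod_inv_distrib]
    refine Finset.prod_congr rfl fun k _ => ?_
    rw [Complex.cpow_neg]
  rw [hfinal]
  exact (hsummable t ht).hasSum

end Stmt9Aux
namespace Stmt9Aux
open Equiv Finset
variable {n : ℕ}

/-- The representative (least element) of the cycle through `j`. -/
noncomputable def repOf (σ : Equiv.Perm (Fin n)) (j : Fin n) : Fin n :=
  (cycleOf' σ j).min' (cycleOf'_nonempty j)

lemma sameCycle_repOf (σ : Equiv.Perm (Fin n)) (j : Fin n) : σ.SameCycle j (repOf σ j) :=
  mem_cycleOf'.1 (Finset.min'_mem _ _)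

lemma repOf_mem (σ : Equiv.Perm (Fin n)) (j : Fin n) : repOf σ j ∈ cycleReps σ := by
  simp only [cycleReps, Finset.mem_filter, Finset.mem_univ, true_and]
  intro k hk
  exact Finset.min'_le _ _ (mem_cycleOf'.2 ((sameCycle_repOf σ j).trans hk))

lemma rep_le {σ : Equiv.Perm (Fin n)} {i j : Fin n} (hi : i ∈ cycleReps σ)
    (h : σ.SameCycle i j) : i ≤ j := by
  simp only [cycleReps, Finset.mem_filter, Finset.mem_univ, true_and] at hi
  exact hi j h

lemma repOf_eq {σ : Equiv.Perm (Fin n)} {i j : Fin n} (hi : i ∈ cycleReps σ)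
    (h : σ.SameCycle i j) : repOf σ j = i := by
  refine le_antisymm ?_ ?_
  · exact Finset.min'_le _ _ (mem_cycleOf'.2 h.symm)
  · exact rep_le hi (h.trans (sameCycle_repOf σ j))

lemma cycles_disjoint (σ : Equiv.Perm (Fin n)) :
    Set.PairwiseDisjoint (↑(cycleReps σ)) (cycleOf' σ) := by
  intro i hi j hj hij
  simp only [Finset.mem_coe] at hi hj
  refine Finset.disjoint_left.2 fun a hai haj => ?_
  have h1 : σ.SameCycle i a := mem_cycleOf'.1 hai
  have h2 : σ.SameCycle j a := mem_cycleOf'.1 haj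
  have : σ.SameCycle i j := h1.trans h2.symm
  exact hij (le_antisymm (rep_le hi this) (rep_le hj this.symm))

lemma biUnion_cycles (σ : Equiv.Perm (Fin n)) :
    (cycleReps σ).biUnion (cycleOf' σ) = Finset.univ := by
  refine Finset.eq_univ_of_forall fun j => ?_
  refine Finset.mem_biUnion.2 ⟨repOf σ j, repOf_mem σ j, ?_⟩
  exact mem_cycleOf'.2 (sameCycle_repOf σ j).symm

/-- The exponent function obtained from a choice `p` of index per cycle. -/
noncomputable def kap (σ : Equiv.Perm (Fin n))
    (p : (a : Fin n) → a ∈ cycleReps σ → ℕ) (j : Fin n) : ℕ :=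
  p (repOf σ j) (repOf_mem σ j)

lemma pi_apply_eq {σ : Equiv.Perm (Fin n)} (p : (a : Fin n) → a ∈ cycleReps σ → ℕ)
    {i j : Fin n} (hij : i = j) (hi : i ∈ cycleReps σ) (hj : j ∈ cycleReps σ) :
    p i hi = p j hj := by subst hij; rfl

lemma kap_eq {σ : Equiv.Perm (Fin n)} (p : (a : Fin n) → a ∈ cycleReps σ → ℕ)
    {i j : Fin n} (hi : i ∈ cycleReps σ) (hj : j ∈ cycleOf' σ i) :
    kap σ p j = p i hi :=
  pi_apply_eq p (repOf_eq hi (mem_cycleOf'.1 hj)) _ _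

lemma block_prod {σ : Equiv.Perm (Fin n)} (W : Fin n → ℕ → ℂ)
    (p : (a : Fin n) → a ∈ cycleReps σ → ℕ) :
    ∏ y ∈ (cycleReps σ).attach, ∏ j ∈ cycleOf' σ y.1, W j (p y.1 y.2) =
      ∏ j : Fin n, W j (kap σ p j) := by
  have h1 : ∀ y : {a // a ∈ cycleReps σ},
      (∏ j ∈ cycleOf' σ y.1, W j (p y.1 y.2)) =
        ∏ j ∈ cycleOf' σ y.1, W j (kap σ p j) := by
    intro y
    refine Finset.prod_congr rfl fun j hj => ?_
    rw [kap_eq p y.2 hj]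
  rw [Finset.prod_congr rfl (fun y _ => h1 y)]
  rw [Finset.prod_attach (cycleReps σ) (fun i => ∏ j ∈ cycleOf' σ i, W j (kap σ p j))]
  rw [← Finset.prod_biUnion (cycles_disjoint σ), biUnion_cycles σ]

end Stmt9Aux
namespace Stmt9Aux
open Equiv Finset MeasureTheory

lemma integral_block {Ω : Type*} [MeasurableSpace Ω] (μ : Measure Ω) [IsProbabilityMeasure μ]
    (θ : Ω → ℂ) (hθmeas : Measurable θ) (hθ : ∀ ω, ‖θ ω‖ = 1)
    (P : Polynomial ℂ) (x : ℂ) {n : ℕ} (σ : Equiv.Perm (Fin n)) :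
    (∫ ω : Fin n → Ω, ∏ i ∈ cycleReps σ,
        P.eval (x ^ (cycleOf' σ i).card * ∏ j ∈ cycleOf' σ i, θ (ω j))
        ∂(Measure.pi fun _ : Fin n => μ)) =
      ∏ i ∈ cycleReps σ, ∑ k ∈ Finset.range (P.natDegree + 1),
        P.coeff k * ((∫ ω, θ ω ^ k ∂μ) * x ^ k) ^ (cycleOf' σ i).card := by
  classical
  set D := P.natDegree with hD
  set pis := (cycleReps σ).pi (fun _ => Finset.range (D+1)) with hpis
  set Cp : ((a : Fin n) → a ∈ cycleReps σ → ℕ) → ℂ :=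
    fun p => ∏ y ∈ (cycleReps σ).attach,
      (P.coeff (p y.1 y.2) * (x ^ (p y.1 y.2)) ^ (cycleOf' σ y.1).card) with hCp
  have hpoint : ∀ ω : Fin n → Ω,
      (∏ i ∈ cycleReps σ, P.eval (x ^ (cycleOf' σ i).card * ∏ j ∈ cycleOf' σ i, θ (ω j))) =
      ∑ p ∈ pis, Cp p * ∏ j : Fin n, θ (ω j) ^ kap σ p j := by
    intro ω
    have e1 : ∀ i ∈ cycleReps σ,
        P.eval (x ^ (cycleOf' σ i).card * ∏ j ∈ cycleOf' σ i, θ (ω j)) =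
        ∑ k ∈ Finset.range (D+1),
          (P.coeff k * (x ^ k) ^ (cycleOf' σ i).card) * ∏ j ∈ cycleOf' σ i, θ (ω j) ^ k := by
      intro i _
      rw [Polynomial.eval_eq_sum_range]
      refine Finset.sum_congr rfl fun k _ => ?_
      rw [mul_pow, ← pow_mul, mul_comm ((cycleOf' σ i).card) k, pow_mul, Finset.prod_pow]
      ring
    rw [Finset.prod_congr rfl e1, Finset.prod_sum]
    refine Finset.sum_congr rfl fun p _ => ?_
    rw [← block_prod (fun j k => θ (ω j) ^ k) p, hCp, ← Finset.prod_mul_distrib]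
  letI : MeasureSpace Ω := { volume := μ }
  haveI : IsProbabilityMeasure (volume : Measure Ω) := ‹IsProbabilityMeasure μ›
  have hvol : (Measure.pi fun _ : Fin n => μ) = (volume : Measure (Fin n → Ω)) := by
    rw [MeasureTheory.volume_pi]
    rfl
  have hmeas : ∀ K : Fin n → ℕ, Measurable fun ω : Fin n → Ω => ∏ j, θ (ω j) ^ K j := by
    intro K
    exact Finset.measurable_prod _ fun j _ =>
      ((hθmeas.comp (measurable_pi_apply j)).pow_const _)
  have hint : ∀ K : Fin n → ℕ,
      Integrable (fun ω : Fin n → Ω => ∏ j, θ (ω j) ^ K j) (Measure.pi fun _ : Fin n => μ) := by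
    intro K
    refine Integrable.mono' (integrable_const 1) ((hmeas K).aestronglyMeasurable) ?_
    refine Filter.Eventually.of_forall fun ω => ?_
    have : ‖∏ j : Fin n, θ (ω j) ^ K j‖ = 1 := by
      rw [norm_prod]
      refine Finset.prod_eq_one fun j _ => ?_
      rw [norm_pow, hθ (ω j), one_pow]
    rw [this]
  have key : ∀ K : Fin n → ℕ,
      (∫ ω : Fin n → Ω, ∏ j, θ (ω j) ^ K j ∂(Measure.pi fun _ : Fin n => μ)) =
        ∏ j, ∫ y, θ y ^ K j ∂μ := by
    intro K
    rw [hvol]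
    exact MeasureTheory.integral_fintype_prod_eq_prod (ι := Fin n) (fun j y => θ y ^ K j)
  rw [integral_congr_ae (Filter.EventuallyEq.of_eq (funext hpoint))]
  rw [MeasureTheory.integral_finset_sum pis (fun p _ => ((hint (kap σ p)).const_mul _))]
  have hper : ∀ p ∈ pis,
      (∫ ω : Fin n → Ω, Cp p * ∏ j, θ (ω j) ^ kap σ p j ∂(Measure.pi fun _ : Fin n => μ)) =
      ∏ y ∈ (cycleReps σ).attach,
        (P.coeff (p y.1 y.2) * ((∫ y', θ y' ^ (p y.1 y.2) ∂μ) * x ^ (p y.1 y.2))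
          ^ (cycleOf' σ y.1).card) := by
    intro p _
    rw [MeasureTheory.integral_const_mul, key (kap σ p),
      ← block_prod (fun _ k => ∫ y', θ y' ^ k ∂μ) p, hCp, ← Finset.prod_mul_distrib]
    refine Finset.prod_congr rfl fun y _ => ?_
    rw [Finset.prod_const, mul_pow]
    ring
  rw [Finset.sum_congr rfl hper, hpis,
    ← Finset.prod_sum (cycleReps σ) (fun _ => Finset.range (D+1))
      (fun i k => P.coeff k * ((∫ y', θ y' ^ k ∂μ) * x ^ k) ^ (cycleOf' σ i).card)]

end Stmt9Aux

/-- Generating function for the second randomized class function `W^2(P)(x)`: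
one iid copy of `θ` (a random variable on the unit circle) per point, the variables of the
points of a cycle being multiplied together.  With `α_k = E[θ^k]`, for `|t| < 1`, `|x| ≤ 1`,
`∑_n E_n[W^2(P)(x)] t^n = ∏_k (1 - α_k x^k t)^{-b_k}`. -/
theorem stmt9 {Ω : Type*} [MeasurableSpace Ω] (μ : Measure Ω) [IsProbabilityMeasure μ]
    (θ : Ω → ℂ) (hθmeas : Measurable θ) (hθ : ∀ ω, ‖θ ω‖ = 1)
    (P : Polynomial ℂ) (x t : ℂ) (hx : ‖x‖ ≤ 1) (ht : ‖t‖ < 1) :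
    HasSum
      (fun n : ℕ =>
        ((Nat.factorial n : ℂ))⁻¹ *
          (∑ σ : Equiv.Perm (Fin n),
            ∫ ω : Fin n → Ω,
              ∏ i ∈ cycleReps σ,
                P.eval (x ^ (cycleOf' σ i).card * ∏ j ∈ cycleOf' σ i, θ (ω j))
              ∂(Measure.pi fun _ : Fin n => μ)) * t ^ n)
      (∏ k ∈ Finset.range (P.natDegree + 1),
        (1 - (∫ ω, θ ω ^ k ∂μ) * x ^ k * t) ^ (-(P.coeff k))) := by
  classical
  open Stmt9Aux in
  set z : ℕ → ℂ := fun k => (∫ ω, θ ω ^ k ∂μ) * x ^ k with hzdef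
  set g : ℕ → ℂ := fun m => ∑ k ∈ Finset.range (P.natDegree + 1), P.coeff k * z k ^ m with hgdef
  have hαle : ∀ k : ℕ, ‖∫ ω, θ ω ^ k ∂μ‖ ≤ 1 := by
    intro k
    calc ‖∫ ω, θ ω ^ k ∂μ‖ ≤ ∫ ω, ‖θ ω ^ k‖ ∂μ := norm_integral_le_integral_norm _
      _ = 1 := by
        have : ∀ ω, ‖θ ω ^ k‖ = 1 := fun ω => by rw [norm_pow, hθ ω, one_pow]
        simp only [this]
        simp
  have hzle : ∀ k, k ∈ Finset.range (P.natDegree + 1) → ‖z k‖ ≤ 1 := by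
    intro k _
    rw [hzdef, norm_mul, norm_pow]
    calc ‖∫ ω, θ ω ^ k ∂μ‖ * ‖x‖ ^ k ≤ 1 * 1 := by
          refine mul_le_mul (hαle k) (pow_le_one₀ (norm_nonneg x) hx) (by positivity)
            zero_le_one
      _ = 1 := mul_one 1
  have hZ : ∀ n : ℕ, (∑ σ : Equiv.Perm (Fin n), ∫ ω : Fin n → Ω, ∏ i ∈ cycleReps σ,
      P.eval (x ^ (cycleOf' σ i).card * ∏ j ∈ cycleOf' σ i, θ (ω j))
      ∂(Measure.pi fun _ : Fin n => μ)) = Stmt9Aux.Zg g n := by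
    intro n
    rw [Stmt9Aux.Zg]
    refine Finset.sum_congr rfl fun σ _ => ?_
    rw [Stmt9Aux.integral_block μ θ hθmeas hθ P x σ,
      ← Stmt9Aux.prod_reps_eq σ (fun c => g c.card)]
  set a : ℕ → ℂ := fun n => ((n.factorial : ℂ))⁻¹ * Stmt9Aux.Zg g n with hadef
  have ha0 : a 0 = 1 := by
    rw [hadef]
    simp [Stmt9Aux.Zg_zero]
  have harec : ∀ n : ℕ, ((n : ℂ) + 1) * a (n+1) = ∑ m ∈ Finset.range (n+1),
      (∑ k ∈ Finset.range (P.natDegree + 1), P.coeff k * z k ^ (m+1)) * a (n-m) := by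
    intro n
    rw [hadef]
    simp only []
    rw [Stmt9Aux.Zg_rec g n, Finset.mul_sum, Finset.mul_sum]
    refine Finset.sum_congr rfl fun m hm => ?_
    have hmn : m ≤ n := Nat.lt_succ_iff.1 (Finset.mem_range.1 hm)
    have hfact : ((n - m).factorial : ℂ) * (n.descFactorial m : ℂ) = (n.factorial : ℂ) := by
      exact_mod_cast congrArg (Nat.cast (R := ℂ)) (Nat.factorial_mul_descFactorial hmn)
    have hsucc : ((n+1).factorial : ℂ) = ((n : ℂ) + 1) * (n.factorial : ℂ) := by
      rw [Nat.factorial_succ]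
      push_cast
      ring
    have hne1 : ((n+1).factorial : ℂ) ≠ 0 := Nat.cast_ne_zero.2 (Nat.factorial_ne_zero _)
    have hne2 : ((n - m).factorial : ℂ) ≠ 0 := Nat.cast_ne_zero.2 (Nat.factorial_ne_zero _)
    have hg' : (∑ k ∈ Finset.range (P.natDegree + 1), P.coeff k * z k ^ (m+1)) = g (m+1) := rfl
    rw [hg']
    field_simp
    rw [hsucc]
    linear_combination (((n : ℂ) + 1) * g (m+1) * Stmt9Aux.Zg g (n-m)) * hfact
  have hmain := Stmt9Aux.analytic_main P.natDegree (fun k => P.coeff k) z hzle a ha0 harec t ht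
  have hfun : (fun n : ℕ =>
      ((Nat.factorial n : ℂ))⁻¹ *
        (∑ σ : Equiv.Perm (Fin n),
          ∫ ω : Fin n → Ω,
            ∏ i ∈ cycleReps σ,
              P.eval (x ^ (cycleOf' σ i).card * ∏ j ∈ cycleOf' σ i, θ (ω j))
            ∂(Measure.pi fun _ : Fin n => μ)) * t ^ n) = fun n => a n * t ^ n := by
    funext n
    rw [hZ n, hadef]
  have hRHS : (∏ k ∈ Finset.range (P.natDegree + 1),
      (1 - (∫ ω, θ ω ^ k ∂μ) * x ^ k * t) ^ (-(P.coeff k))) =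
      ∏ k ∈ Finset.range (P.natDegree + 1), (1 - z k * t) ^ (-(P.coeff k)) := by
    refine Finset.prod_congr rfl fun k _ => ?_
    rw [hzdef]
  rw [hfun, hRHS]
  exact hmain
end

section
/- Let θ be uniform on S^1 and ϑ = conjugate of θ. Then for natural numbers s_1, s_2 and |x| = 1, the generating function of E_n[(W^1 Z_n(x))^{s_1} · conj(W^1 Z_n(x))^{s_2}] equals (1−t)^{−binom(s_1+s_2, s_1)}, i.e. E_n[(W^1 Z_n(x))^{s_1} · conj((W^1 Z_n(x))^{s_2})] = binom(n + binom(s_1+s_2,s_1) − 1, n) for |x| = 1; in particular the computation uses the Vandermonde identity ∑_k binom(s_1,k)binom(s_2,k) = binom(s_1+s_2,s_1). -/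
open scoped BigOperators Classical Real
open MeasureTheory

/-- The length of the cycle of `σ` containing `i`. -/
noncomputable def cycleLen {n : ℕ} (σ : Equiv.Perm (Fin n)) (i : Fin n) : ℕ :=
  (Finset.univ.filter fun j => σ.SameCycle i j).card

noncomputable def rep {n : ℕ} (σ : Equiv.Perm (Fin n)) (i : Fin n) : Fin n :=
  (Finset.univ.filter fun j => σ.SameCycle i j).min'
    ⟨i, Finset.mem_filter.2 ⟨Finset.mem_univ i, Equiv.Perm.SameCycle.refl σ i⟩⟩

lemma rep_sameCycle {n : ℕ} (σ : Equiv.Perm (Fin n)) (i : Fin n) : σ.SameCycle i (rep σ i) := by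
  have := Finset.min'_mem (Finset.univ.filter fun j => σ.SameCycle i j)
    ⟨i, Finset.mem_filter.2 ⟨Finset.mem_univ i, Equiv.Perm.SameCycle.refl σ i⟩⟩
  exact (Finset.mem_filter.1 this).2

lemma rep_le {n : ℕ} {σ : Equiv.Perm (Fin n)} {i j : Fin n} (h : σ.SameCycle i j) :
    rep σ i ≤ j :=
  Finset.min'_le _ _ (Finset.mem_filter.2 ⟨Finset.mem_univ j, h⟩)

lemma rep_mem {n : ℕ} (σ : Equiv.Perm (Fin n)) (i : Fin n) : rep σ i ∈ cycleReps σ := by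
  refine Finset.mem_filter.2 ⟨Finset.mem_univ _, fun j hj => ?_⟩
  exact rep_le ((rep_sameCycle σ i).trans hj)

lemma rep_eq_self_of_mem {n : ℕ} {σ : Equiv.Perm (Fin n)} {i : Fin n} (h : i ∈ cycleReps σ) :
    rep σ i = i :=
  le_antisymm (rep_le (Equiv.Perm.SameCycle.refl σ i))
    ((Finset.mem_filter.1 h).2 _ (rep_sameCycle σ i))

lemma rep_eq_of_sameCycle {n : ℕ} {σ : Equiv.Perm (Fin n)} {i j : Fin n}
    (h : σ.SameCycle i j) : rep σ i = rep σ j :=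
  le_antisymm (rep_le (h.trans (rep_sameCycle σ j)))
    (rep_le (h.symm.trans (rep_sameCycle σ i)))

lemma comp_zpow_eq {n : ℕ} {c : ℕ} {σ : Equiv.Perm (Fin n)} {f : Fin n → Fin c}
    (hf : ∀ i, f (σ i) = f i) : ∀ (k : ℤ) (i : Fin n), f ((σ ^ k) i) = f i := by
  have hf' : ∀ i, f (σ⁻¹ i) = f i := fun i => by
    conv_rhs => rw [← (show σ (σ⁻¹ i) = i by simp), hf]
  intro k
  induction k using Int.induction_on with
  | zero => simp
  | succ k ih => intro i; rw [zpow_add_one, Equiv.Perm.mul_apply, ih, hf]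
  | pred k ih => intro i; rw [zpow_sub_one, Equiv.Perm.mul_apply, ih, hf']

lemma const_of_sameCycle {n c : ℕ} {σ : Equiv.Perm (Fin n)} {f : Fin n → Fin c}
    (hf : ∀ i, f (σ i) = f i) {i j : Fin n} (h : σ.SameCycle i j) : f i = f j := by
  obtain ⟨k, hk⟩ := h
  rw [← hk, comp_zpow_eq hf]

lemma count_sum (n c : ℕ) :
    ∑ σ : Equiv.Perm (Fin n), c ^ (cycleReps σ).card
      = (c + n - 1).choose n * n.factorial := by
  letI action : MulAction (Equiv.Perm (Fin n)) (Fin n → Fin c) :=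
    { smul := fun σ f => f ∘ ⇑σ⁻¹
      one_smul := fun f => by funext i; simp [HSMul.hSMul]
      mul_smul := fun σ τ f => by
        funext i
        show f (((σ * τ)⁻¹) i) = f (τ⁻¹ (σ⁻¹ i))
        simp [mul_inv_rev] }
  have hsmul : ∀ (σ : Equiv.Perm (Fin n)) (f : Fin n → Fin c), σ • f = f ∘ ⇑σ⁻¹ :=
    fun _ _ => rfl
  -- fixed points
  have hfix : ∀ σ : Equiv.Perm (Fin n),
      Fintype.card (MulAction.fixedBy (Fin n → Fin c) σ) = c ^ (cycleReps σ).card := by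
    intro σ
    have key : ∀ f : Fin n → Fin c, f ∈ MulAction.fixedBy (Fin n → Fin c) σ ↔
        ∀ i, f (σ i) = f i := by
      intro f
      constructor
      · intro hf i
        have h2 : f ∘ ⇑σ⁻¹ = f := hf
        conv_lhs => rw [← h2]
        simp
      · intro hf
        show f ∘ ⇑σ⁻¹ = f
        funext i
        show f (σ⁻¹ i) = f i
        conv_rhs => rw [← (show σ (σ⁻¹ i) = i by simp), hf]
    have e : MulAction.fixedBy (Fin n → Fin c) σ ≃ (↥(cycleReps σ) → Fin c) :=
      { toFun := fun f j => f.1 j.1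
        invFun := fun g => ⟨fun i => g ⟨rep σ i, rep_mem σ i⟩, by
          rw [key]
          intro i
          congr 1
          exact Subtype.ext (rep_eq_of_sameCycle ⟨-1, by simp⟩)⟩
        left_inv := fun f => by
          apply Subtype.ext
          funext i
          exact (const_of_sameCycle ((key f.1).1 f.2) (rep_sameCycle σ i)).symm
        right_inv := fun g => by
          funext j
          show g ⟨rep σ j.1, _⟩ = g j
          congr 1
          exact Subtype.ext (rep_eq_self_of_mem j.2) }
    rw [Fintype.card_congr e]
    simp [Fintype.card_fun]
  -- the multiset-of-values map
  classical
  let μmap : (Fin n → Fin c) → Sym (Fin c) n := fun f =>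
    ⟨Multiset.map f Finset.univ.val, by
      rw [Multiset.card_map]; exact Finset.card_fin n⟩
  have hforward : ∀ (τ : Equiv.Perm (Fin n)) (g : Fin n → Fin c), μmap (τ • g) = μmap g := by
    intro τ g
    apply Subtype.ext
    show Multiset.map (g ∘ ⇑τ⁻¹) Finset.univ.val = Multiset.map g Finset.univ.val
    rw [← Multiset.map_map]
    congr 1
    have h1 : Finset.map (τ⁻¹ : Equiv.Perm (Fin n)).toEmbedding Finset.univ = Finset.univ :=
      Finset.map_univ_equiv _
    calc Multiset.map (⇑τ⁻¹) Finset.univ.val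
        = (Finset.map (τ⁻¹ : Equiv.Perm (Fin n)).toEmbedding Finset.univ).val := rfl
      _ = Finset.univ.val := by rw [h1]
  have hback : ∀ f g : Fin n → Fin c, μmap f = μmap g →
      ∃ τ : Equiv.Perm (Fin n), τ • g = f := by
    intro f g h
    have hval : Multiset.map f Finset.univ.val = Multiset.map g Finset.univ.val :=
      congrArg Subtype.val h
    have hcount : ∀ v, Fintype.card {x // g x = v} = Fintype.card {x // f x = v} := by
      intro v
      have h' : Multiset.count v (Multiset.map f Finset.univ.val)
          = Multiset.count v (Multiset.map g Finset.univ.val) := by rw [hval]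
      rw [Multiset.count_map, Multiset.count_map] at h'
      rw [Fintype.card_subtype, Fintype.card_subtype]
      have e1 : (Finset.univ.filter fun x => f x = v) = (Finset.univ.filter fun a => v = f a) := by
        ext a; simp [eq_comm]
      have e2 : (Finset.univ.filter fun x => g x = v) = (Finset.univ.filter fun a => v = g a) := by
        ext a; simp [eq_comm]
      rw [e1, e2]
      show Multiset.card (Multiset.filter _ Finset.univ.val)
        = Multiset.card (Multiset.filter _ Finset.univ.val)
      rw [Multiset.filter_congr (fun x _ => Iff.rfl), h']
    let e : ∀ v : Fin c, {x // g x = v} ≃ {x // f x = v} := fun v =>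
      Fintype.equivOfCardEq (hcount v)
    let τ : Equiv.Perm (Fin n) :=
      ((Equiv.sigmaFiberEquiv g).symm.trans (Equiv.sigmaCongrRight e)).trans
        (Equiv.sigmaFiberEquiv f)
    have hτ : ∀ j, f (τ j) = g j := by
      intro j
      show f ((Equiv.sigmaFiberEquiv f) ((Equiv.sigmaCongrRight e)
        ((Equiv.sigmaFiberEquiv g).symm j))) = g j
      have h0 : (Equiv.sigmaFiberEquiv g).symm j = ⟨g j, j, rfl⟩ := rfl
      rw [h0]
      exact (e (g j) ⟨j, rfl⟩).2
    refine ⟨τ, ?_⟩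
    rw [hsmul]
    funext i
    show g (τ⁻¹ i) = f i
    have := hτ (τ⁻¹ i)
    rw [show τ (τ⁻¹ i) = i by simp] at this
    exact this.symm
  -- surjectivity of μmap
  have hsurjμ : Function.Surjective μmap := by
    rintro ⟨ms, hm⟩
    induction ms using Quotient.inductionOn with
    | h l =>
      have hl : l.length = n := by simpa using hm
      refine ⟨fun i => l.get (Fin.cast hl.symm i), ?_⟩
      apply Subtype.ext
      show Multiset.map (fun i => l.get (Fin.cast hl.symm i)) Finset.univ.val
        = (l : Multiset (Fin c))
      have huniv : (Finset.univ.val : Multiset (Fin n)) = ↑(List.finRange n) := rfl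
      rw [huniv]
      show ((List.finRange n).map fun i => l.get (Fin.cast hl.symm i)) = (l : Multiset (Fin c))
      congr 1
      rw [← List.ofFn_eq_map]
      subst hl
      simp [Fin.cast]
  -- the induced bijection on the quotient
  letI : Fintype (Quotient (MulAction.orbitRel (Equiv.Perm (Fin n)) (Fin n → Fin c))) :=
    Quotient.fintype _
  let q : Quotient (MulAction.orbitRel (Equiv.Perm (Fin n)) (Fin n → Fin c)) → Sym (Fin c) n :=
    Quotient.lift μmap (by
      intro f g h
      obtain ⟨τ, hτ⟩ := MulAction.mem_orbit_iff.1 h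
      rw [← hτ, hforward])
  have hq : Function.Bijective q := by
    constructor
    · intro a b
      induction a using Quotient.inductionOn with
      | h f =>
        induction b using Quotient.inductionOn with
        | h g =>
          intro h
          exact Quotient.sound (MulAction.mem_orbit_iff.2 (hback f g h))
    · intro m
      obtain ⟨f, hf⟩ := hsurjμ m
      exact ⟨⟦f⟧, hf⟩
  have hΩ : Fintype.card
      (Quotient (MulAction.orbitRel (Equiv.Perm (Fin n)) (Fin n → Fin c)))
      = (c + n - 1).choose n := by
    rw [Fintype.card_of_bijective hq, Sym.card_sym_eq_choose, Fintype.card_fin]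
  have hb := MulAction.sum_card_fixedBy_eq_card_orbits_mul_card_group
    (Equiv.Perm (Fin n)) (Fin n → Fin c)
  calc ∑ σ : Equiv.Perm (Fin n), c ^ (cycleReps σ).card
      = ∑ σ : Equiv.Perm (Fin n),
          Fintype.card (MulAction.fixedBy (Fin n → Fin c) σ) := by
        exact Finset.sum_congr rfl fun σ _ => (hfix σ).symm
    _ = (c + n - 1).choose n * n.factorial := by
        rw [hb, hΩ, Fintype.card_perm, Fintype.card_fin]

lemma sub_pow_expand (z : ℂ) (s : ℕ) :
    (1 - z) ^ s = ∑ k ∈ Finset.range (s + 1), (Nat.choose s k : ℂ) * (-z) ^ k := by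
  rw [sub_eq_add_neg, add_comm, add_pow]
  exact Finset.sum_congr rfl fun k _ => by ring

lemma exp_int_integral (m l : ℕ) :
    (∫ t in (0:ℝ)..1, Complex.exp ((2 * ↑π * Complex.I * ((m:ℂ) - (l:ℂ))) * ↑t))
      = if m = l then 1 else 0 := by
  by_cases h : m = l
  · subst h; simp
  · have hc : (2 * ↑π * Complex.I * ((m:ℂ) - (l:ℂ))) ≠ 0 := by
      apply mul_ne_zero (mul_ne_zero (mul_ne_zero ?_ ?_) ?_)
      · rw [sub_ne_zero]
        exact_mod_cast h
      · norm_num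
      · exact_mod_cast Real.pi_ne_zero
      · exact Complex.I_ne_zero
    rw [integral_exp_mul_complex hc, if_neg h]
    have h1 : Complex.exp ((2 * ↑π * Complex.I * ((m:ℂ) - (l:ℂ))) * ((1:ℝ):ℂ)) = 1 := by
      have h2 := Complex.exp_int_mul_two_pi_mul_I ((m:ℤ) - (l:ℤ))
      rw [← h2]
      congr 1
      push_cast
      ring
    rw [h1]
    simp

lemma vandermonde_diag (s₁ s₂ : ℕ) :
    ∑ k ∈ Finset.range (s₁ + 1), s₁.choose k * s₂.choose k = (s₁ + s₂).choose s₁ := by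
  have h : (s₁ + s₂).choose s₁
      = ∑ k ∈ Finset.range (s₁ + 1), s₁.choose k * s₂.choose (s₁ - k) := by
    rw [Nat.add_choose_eq, Finset.Nat.sum_antidiagonal_eq_sum_range_succ_mk]
  rw [h]
  conv_rhs => rw [← Finset.sum_range_reflect]
  apply Finset.sum_congr rfl
  intro k hk
  have hk' : k ≤ s₁ := Nat.lt_succ_iff.1 (Finset.mem_range.1 hk)
  have h1 : s₁ + 1 - 1 - k = s₁ - k := by omega
  have h2 : s₁ - (s₁ - k) = k := by omega
  rw [h1, h2, Nat.choose_symm hk']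

lemma key_integral (s₁ s₂ : ℕ) (y : ℂ) (hy : ‖y‖ = 1) :
    (∫ t : ℝ, (1 - Complex.exp (2 * ↑π * Complex.I * ↑t) * y) ^ s₁ *
        (starRingEnd ℂ) ((1 - Complex.exp (2 * ↑π * Complex.I * ↑t) * y) ^ s₂)
      ∂(volume.restrict (Set.Ioc (0:ℝ) 1))) = ((s₁ + s₂).choose s₁ : ℂ) := by
  have hyabs : ‖y‖ = 1 := hy
  have hyc : y * (starRingEnd ℂ) y = 1 := by
    rw [Complex.mul_conj, Complex.normSq_eq_norm_sq, hyabs]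
    norm_num
  set a : ℕ → ℕ → ℂ := fun k l =>
    (s₁.choose k : ℂ) * (s₂.choose l : ℂ) * (-y) ^ k * (-((starRingEnd ℂ) y)) ^ l with ha
  have h1 : ∀ t : ℝ, (1 - Complex.exp (2 * ↑π * Complex.I * ↑t) * y) ^ s₁ *
        (starRingEnd ℂ) ((1 - Complex.exp (2 * ↑π * Complex.I * ↑t) * y) ^ s₂)
      = ∑ k ∈ Finset.range (s₁ + 1), ∑ l ∈ Finset.range (s₂ + 1),
          a k l * Complex.exp ((2 * ↑π * Complex.I * ((k:ℂ) - (l:ℂ))) * ↑t) := by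
    intro t
    have hconjarg : (starRingEnd ℂ) (2 * ↑π * Complex.I * ↑t)
        = -(2 * ↑π * Complex.I * ↑t) := by
      simp only [map_mul, Complex.conj_I, Complex.conj_ofReal, map_ofNat]
      ring
    have hconj : (starRingEnd ℂ) ((1 - Complex.exp (2 * ↑π * Complex.I * ↑t) * y) ^ s₂)
        = (1 - Complex.exp (-(2 * ↑π * Complex.I * ↑t)) * (starRingEnd ℂ) y) ^ s₂ := by
      rw [map_pow, map_sub, map_one, map_mul, ← Complex.exp_conj, hconjarg]
    rw [hconj, sub_pow_expand, sub_pow_expand, Finset.sum_mul_sum]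
    apply Finset.sum_congr rfl; intro k _
    apply Finset.sum_congr rfl; intro l _
    have hexp : Complex.exp (2 * ↑π * Complex.I * ↑t) ^ k *
        Complex.exp (-(2 * ↑π * Complex.I * ↑t)) ^ l
        = Complex.exp ((2 * ↑π * Complex.I * ((k:ℂ) - (l:ℂ))) * ↑t) := by
      rw [← Complex.exp_nat_mul, ← Complex.exp_nat_mul, ← Complex.exp_add]
      congr 1
      ring
    rw [ha, ← hexp]
    ring
  have hle : (0:ℝ) ≤ 1 := zero_le_one
  rw [show (∫ t : ℝ, (1 - Complex.exp (2 * ↑π * Complex.I * ↑t) * y) ^ s₁ *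
        (starRingEnd ℂ) ((1 - Complex.exp (2 * ↑π * Complex.I * ↑t) * y) ^ s₂)
      ∂(volume.restrict (Set.Ioc (0:ℝ) 1)))
      = ∫ t in (0:ℝ)..1, (1 - Complex.exp (2 * ↑π * Complex.I * ↑t) * y) ^ s₁ *
        (starRingEnd ℂ) ((1 - Complex.exp (2 * ↑π * Complex.I * ↑t) * y) ^ s₂)
      from (intervalIntegral.integral_of_le hle).symm]
  have hcont : ∀ k l : ℕ, Continuous fun t : ℝ =>
      a k l * Complex.exp ((2 * ↑π * Complex.I * ((k:ℂ) - (l:ℂ))) * ↑t) :=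
    fun k l => continuous_const.mul
      (Complex.continuous_exp.comp (continuous_const.mul Complex.continuous_ofReal))
  simp only [h1]
  rw [intervalIntegral.integral_finset_sum (fun k _ =>
    ((continuous_finset_sum _ fun l _ => hcont k l).intervalIntegrable _ _))]
  have h3 : ∀ k ∈ Finset.range (s₁ + 1),
      (∫ t in (0:ℝ)..1, ∑ l ∈ Finset.range (s₂ + 1),
        a k l * Complex.exp ((2 * ↑π * Complex.I * ((k:ℂ) - (l:ℂ))) * ↑t))
      = ∑ l ∈ Finset.range (s₂ + 1), if k = l then a k l else 0 := by
    intro k _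
    rw [intervalIntegral.integral_finset_sum (fun l _ => (hcont k l).intervalIntegrable _ _)]
    apply Finset.sum_congr rfl
    intro l _
    rw [intervalIntegral.integral_const_mul, exp_int_integral k l]
    split_ifs <;> simp
  rw [Finset.sum_congr rfl h3]
  have h4 : ∀ k ∈ Finset.range (s₁ + 1),
      (∑ l ∈ Finset.range (s₂ + 1), if k = l then a k l else 0)
        = ((s₁.choose k * s₂.choose k : ℕ) : ℂ) := by
    intro k _
    rw [Finset.sum_ite_eq]
    by_cases hk : k ∈ Finset.range (s₂ + 1)
    · rw [if_pos hk, ha]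
      have : (-y) ^ k * (-((starRingEnd ℂ) y)) ^ k = 1 := by
        rw [← mul_pow]
        have : -y * -((starRingEnd ℂ) y) = 1 := by rw [neg_mul_neg, hyc]
        rw [this, one_pow]
      push_cast
      calc (s₁.choose k : ℂ) * (s₂.choose k : ℂ) * (-y) ^ k * (-((starRingEnd ℂ) y)) ^ k
          = (s₁.choose k : ℂ) * (s₂.choose k : ℂ) * ((-y) ^ k * (-((starRingEnd ℂ) y)) ^ k) := by
            ring
        _ = (s₁.choose k : ℂ) * (s₂.choose k : ℂ) := by rw [this, mul_one]
    · rw [if_neg hk]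
      have : s₂.choose k = 0 := Nat.choose_eq_zero_of_lt (by
        simpa [Nat.lt_succ_iff, not_le] using (fun h => hk (Finset.mem_range.2 (Nat.lt_succ_of_le h))))
      rw [this]
      simp
  rw [Finset.sum_congr rfl h4, ← Nat.cast_sum, vandermonde_diag]

lemma pi_integral {ι : Type*} [Fintype ι] (μ : Measure ℝ) [SigmaFinite μ] (f : ι → ℝ → ℂ) :
    ∫ x : ι → ℝ, ∏ i, f i (x i) ∂(Measure.pi fun _ => μ) = ∏ i, ∫ x, f i x ∂μ := by
  letI : MeasureSpace ℝ := ⟨μ⟩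
  exact MeasureTheory.integral_fintype_prod_eq_prod (μ := fun _ => μ) f

lemma prod_to_univ {n : ℕ} (S : Finset (Fin n)) (h : Fin n → ℂ) :
    ∏ i ∈ S, h i = ∏ i : Fin n, if i ∈ S then h i else 1 := by
  rw [← Finset.prod_subset (Finset.subset_univ S) (fun x _ hx => if_neg hx)]
  exact (Finset.prod_congr rfl fun i hi => (if_pos hi).symm)

lemma per_sigma (n s₁ s₂ : ℕ) (x : ℂ) (hx : ‖x‖ = 1) (σ : Equiv.Perm (Fin n)) :
    (∫ u : Fin n → ℝ,
        (∏ i ∈ cycleReps σ,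
            (1 - Complex.exp (2 * π * Complex.I * (u i)) * x ^ cycleLen σ i)) ^ s₁ *
        (starRingEnd ℂ)
          ((∏ i ∈ cycleReps σ,
              (1 - Complex.exp (2 * π * Complex.I * (u i)) * x ^ cycleLen σ i)) ^ s₂)
        ∂(Measure.pi fun _ : Fin n => volume.restrict (Set.Ioc (0 : ℝ) 1)))
      = ((s₁ + s₂).choose s₁ : ℂ) ^ (cycleReps σ).card := by
  have hnorm : ∀ i, ‖x ^ cycleLen σ i‖ = 1 := fun i => by rw [norm_pow, hx, one_pow]
  have h1 : (fun u : Fin n → ℝ =>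
      (∏ i ∈ cycleReps σ,
          (1 - Complex.exp (2 * π * Complex.I * (u i)) * x ^ cycleLen σ i)) ^ s₁ *
        (starRingEnd ℂ)
          ((∏ i ∈ cycleReps σ,
              (1 - Complex.exp (2 * π * Complex.I * (u i)) * x ^ cycleLen σ i)) ^ s₂))
      = fun u : Fin n → ℝ => ∏ i : Fin n,
          (fun (i : Fin n) (t : ℝ) => if i ∈ cycleReps σ then
            (1 - Complex.exp (2 * ↑π * Complex.I * ↑t) * x ^ cycleLen σ i) ^ s₁ *
              (starRingEnd ℂ)
                ((1 - Complex.exp (2 * ↑π * Complex.I * ↑t) * x ^ cycleLen σ i) ^ s₂)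
          else 1) i (u i) := by
    funext u
    rw [← Finset.prod_pow, ← Finset.prod_pow, map_prod, ← Finset.prod_mul_distrib,
      prod_to_univ]
  rw [h1, pi_integral (volume.restrict (Set.Ioc (0:ℝ) 1))
    (fun (i : Fin n) (t : ℝ) => if i ∈ cycleReps σ then
      (1 - Complex.exp (2 * ↑π * Complex.I * ↑t) * x ^ cycleLen σ i) ^ s₁ *
        (starRingEnd ℂ)
          ((1 - Complex.exp (2 * ↑π * Complex.I * ↑t) * x ^ cycleLen σ i) ^ s₂)
    else 1)]
  have h2 : ∀ i : Fin n,
      (∫ t : ℝ, (if i ∈ cycleReps σ then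
          (1 - Complex.exp (2 * ↑π * Complex.I * ↑t) * x ^ cycleLen σ i) ^ s₁ *
            (starRingEnd ℂ)
              ((1 - Complex.exp (2 * ↑π * Complex.I * ↑t) * x ^ cycleLen σ i) ^ s₂)
        else 1) ∂(volume.restrict (Set.Ioc (0:ℝ) 1)))
      = if i ∈ cycleReps σ then ((s₁ + s₂).choose s₁ : ℂ) else 1 := by
    intro i
    by_cases hi : i ∈ cycleReps σ
    · simp only [if_pos hi]
      exact key_integral s₁ s₂ _ (hnorm i)
    · simp only [if_neg hi]
      rw [integral_const]
      rw [Measure.real, Measure.restrict_apply_univ, Real.volume_Ioc]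
      norm_num
  calc (∏ i : Fin n, ∫ t : ℝ, (if i ∈ cycleReps σ then
          (1 - Complex.exp (2 * ↑π * Complex.I * ↑t) * x ^ cycleLen σ i) ^ s₁ *
            (starRingEnd ℂ)
              ((1 - Complex.exp (2 * ↑π * Complex.I * ↑t) * x ^ cycleLen σ i) ^ s₂)
        else 1) ∂(volume.restrict (Set.Ioc (0:ℝ) 1)))
      = ∏ i : Fin n, (if i ∈ cycleReps σ then ((s₁ + s₂).choose s₁ : ℂ) else 1) :=
        Finset.prod_congr rfl fun i _ => h2 i
    _ = ∏ i ∈ cycleReps σ, ((s₁ + s₂).choose s₁ : ℂ) := (prod_to_univ _ _).symm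
    _ = ((s₁ + s₂).choose s₁ : ℂ) ^ (cycleReps σ).card := Finset.prod_const _

/-- For `θ` uniform on the unit circle (realized as `θ = e^{2πiu}` with `u` uniform on `(0,1]`)
and `ϑ = conj θ`, `s₁, s₂ ∈ ℕ` and `|x| = 1`:
`E_n[(W¹Zₙ(x))^{s₁} · conj(W¹Zₙ(x))^{s₂}] = binom(n + binom(s₁+s₂, s₁) − 1, n)`,
i.e. the generating function is `(1−t)^{-binom(s₁+s₂,s₁)}`, by the Vandermonde identity. -/
theorem stmt10 (n s₁ s₂ : ℕ) (x : ℂ) (hx : ‖x‖ = 1) :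
    ((Nat.factorial n : ℂ))⁻¹ *
        ∑ σ : Equiv.Perm (Fin n),
          ∫ u : Fin n → ℝ,
            (∏ i ∈ cycleReps σ,
                (1 - Complex.exp (2 * π * Complex.I * (u i)) * x ^ cycleLen σ i)) ^ s₁ *
            (starRingEnd ℂ)
              ((∏ i ∈ cycleReps σ,
                  (1 - Complex.exp (2 * π * Complex.I * (u i)) * x ^ cycleLen σ i)) ^ s₂)
            ∂(Measure.pi fun _ : Fin n => volume.restrict (Set.Ioc (0 : ℝ) 1))
      = (Nat.choose (n + Nat.choose (s₁ + s₂) s₁ - 1) n : ℂ) := by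
  rw [Finset.sum_congr rfl (fun σ _ => per_sigma n s₁ s₂ x hx σ)]
  have h3 : ∑ σ : Equiv.Perm (Fin n), ((s₁ + s₂).choose s₁ : ℂ) ^ (cycleReps σ).card
      = ((∑ σ : Equiv.Perm (Fin n), ((s₁ + s₂).choose s₁) ^ (cycleReps σ).card : ℕ) : ℂ) := by
    push_cast
    rfl
  rw [h3, count_sum]
  have hcn : n + (s₁ + s₂).choose s₁ - 1 = (s₁ + s₂).choose s₁ + n - 1 := by omega
  rw [hcn]
  have hfact : (n.factorial : ℂ) ≠ 0 := Nat.cast_ne_zero.2 n.factorial_ne_zero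
  push_cast
  field_simp
end
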